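/- arXiv:2210.04374 — 10 statements merged into one kernel-verified Lean document; each statement's English description precedes it below -/
import Mathlib

section
/- Let X be a finite-dimensional real normed space. Then the Fermat–Torricelli set ft(x₁,…,xₙ) is a singleton for every finite tuple of points x₁,…,xₙ of X that do not all lie on one affine line if and only if X is strictly convex (the unit sphere of X contains no non-degenerate line segment). -/
/-- The Fermat–Torricelli set of a finite tuple of points: the set of points minimizing
the sum of distances to the given points. -/
noncomputable def ftSet {X : Type*} [NormedAddCommGroup X] {n : ℕ} (x : Fin n → X) : Set X :=
  {p | ∀ q : X, ∑ i, ‖p - x i‖ ≤ ∑ i, ‖q - x i‖}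

/-- On a flat segment of the unit sphere, the norm is additive with nonnegative
coefficients. -/
lemma flat_norm {X : Type*} [NormedAddCommGroup X] [NormedSpace ℝ X] {u v : X}
    (h : segment ℝ u v ⊆ {z : X | ‖z‖ = 1}) {s t : ℝ} (hs : 0 ≤ s) (ht : 0 ≤ t) :
    ‖s • u + t • v‖ = s + t := by
  rcases eq_or_lt_of_le (by positivity : (0:ℝ) ≤ s + t) with hst | hst
  · have hs0 : s = 0 := by linarith
    have ht0 : t = 0 := by linarith
    simp [hs0, ht0]
  · have hc : s + t ≠ 0 := ne_of_gt hst
    have hmem : (s / (s + t)) • u + (t / (s + t)) • v ∈ segment ℝ u v :=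
      ⟨s / (s + t), t / (s + t), div_nonneg hs hst.le, div_nonneg ht hst.le,
        by field_simp, rfl⟩
    have h1 : ‖(s / (s + t)) • u + (t / (s + t)) • v‖ = 1 := h hmem
    have heq : s • u + t • v = (s + t) • ((s / (s + t)) • u + (t / (s + t)) • v) := by
      rw [smul_add, smul_smul, smul_smul, mul_div_cancel₀ _ hc, mul_div_cancel₀ _ hc]
    rw [heq, norm_smul, Real.norm_of_nonneg hst.le, h1, mul_one]

/-- In a finite-dimensional real normed space, the Fermat–Torricelli set is a singleton
for every finite tuple of non-collinear points if and only if the norm is strictly convex,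
i.e. the unit sphere contains no non-degenerate line segment. -/
theorem ft_singleton_iff_strictly_convex
    {X : Type*} [NormedAddCommGroup X] [NormedSpace ℝ X] [FiniteDimensional ℝ X] :
    (∀ (n : ℕ) (x : Fin n → X), ¬ Collinear ℝ (Set.range x) → ∃ p : X, ftSet x = {p}) ↔
      (∀ u v : X, ‖u‖ = 1 → ‖v‖ = 1 → u ≠ v → ¬ (segment ℝ u v ⊆ {z : X | ‖z‖ = 1})) := by
  constructor
  · -- singleton property → strict convexity
    intro H u v hu hv huv hseg
    have huv2 : ‖u + v‖ = 2 := by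
      have h := flat_norm hseg (zero_le_one (α := ℝ)) (zero_le_one (α := ℝ))
      norm_num at h
      exact h
    have huv4 : ‖(u + v) + (u + v)‖ = 4 := by
      have h := flat_norm hseg (by norm_num : (0:ℝ) ≤ 2) (by norm_num : (0:ℝ) ≤ 2)
      have e : (2:ℝ) • u + (2:ℝ) • v = (u + v) + (u + v) := by module
      rw [e] at h
      norm_num at h
      exact h
    have huvne : u + v ≠ 0 := by
      intro h0
      rw [h0, norm_zero] at huv2
      norm_num at huv2
    -- linear independence of u and v
    have hindep : ∀ a b : ℝ, a • u + b • v = 0 → a = 0 ∧ b = 0 := by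
      intro a b hab
      have hnorm : ‖a • u‖ = ‖b • v‖ := by
        have : a • u = -(b • v) := by
          rw [eq_neg_iff_add_eq_zero]; exact hab
        rw [this, norm_neg]
      rw [norm_smul, norm_smul, hu, hv, mul_one, mul_one] at hnorm
      rcases abs_eq_abs.mp hnorm with hba | hba
      · -- a = b
        subst hba
        have h0 : a • (u + v) = 0 := by linear_combination (norm := module) hab
        rcases smul_eq_zero.mp h0 with ha | hc
        · exact ⟨ha, ha⟩
        · exact absurd hc huvne
      · -- a = -b
        subst hba
        have h0 : b • (u - v) = 0 := by linear_combination (norm := module) -hab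
        rcases smul_eq_zero.mp h0 with hb | hc
        · exact ⟨by rw [hb, neg_zero], hb⟩
        · exact absurd (sub_eq_zero.mp hc) huv
    set w : X := u - v with hwdef
    have hww : ‖w + w‖ = 2 * ‖w‖ := by
      have : w + w = (2:ℝ) • w := by module
      rw [this, norm_smul]
      norm_num
    set x : Fin 4 → X := ![u + v, -(u + v), w, -w] with hx
    have hsum : ∀ q : X, ∑ i, ‖q - x i‖ =
        ‖q - (u + v)‖ + ‖q + (u + v)‖ + ‖q - w‖ + ‖q + w‖ := by
      intro q
      rw [hx, Fin.sum_univ_four]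
      simp only [Matrix.cons_val_zero, Matrix.cons_val_one, Matrix.head_cons,
        Matrix.cons_val_two, Matrix.tail_cons, Matrix.cons_val_three, sub_neg_eq_add]
    -- lower bound
    have hlow : ∀ q : X, 4 + 2 * ‖w‖ ≤ ∑ i, ‖q - x i‖ := by
      intro q
      rw [hsum q]
      have h1 : ‖(u + v) + (u + v)‖ ≤ ‖q + (u + v)‖ + ‖q - (u + v)‖ := by
        have e : (u + v) + (u + v) = (q + (u + v)) - (q - (u + v)) := by abel
        rw [e]
        exact norm_sub_le _ _
      have h2 : ‖w + w‖ ≤ ‖q + w‖ + ‖q - w‖ := by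
        have e : w + w = (q + w) - (q - w) := by abel
        rw [e]
        exact norm_sub_le _ _
      rw [huv4] at h1
      rw [hww] at h2
      linarith
    -- 0 and w are both Fermat–Torricelli points
    have hmem0 : (0 : X) ∈ ftSet x := by
      intro q
      rw [hsum 0, hsum q]
      have e0 : ‖(0:X) - (u + v)‖ + ‖(0:X) + (u + v)‖ + ‖(0:X) - w‖ + ‖(0:X) + w‖
          = 4 + 2 * ‖w‖ := by
        rw [zero_sub, zero_add, zero_sub, zero_add, norm_neg, norm_neg, huv2]
        ring
      rw [e0]
      have := hlow q
      rw [hsum q] at this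
      exact this
    have hmemw : w ∈ ftSet x := by
      intro q
      rw [hsum w, hsum q]
      have e1 : w - (u + v) = -(v + v) := by rw [hwdef]; abel
      have e2 : w + (u + v) = u + u := by rw [hwdef]; abel
      have hvv : ‖v + v‖ = 2 := by
        have : v + v = (2:ℝ) • v := by module
        rw [this, norm_smul, hv]
        norm_num
      have huu : ‖u + u‖ = 2 := by
        have : u + u = (2:ℝ) • u := by module
        rw [this, norm_smul, hu]
        norm_num
      have ew : ‖w - (u + v)‖ + ‖w + (u + v)‖ + ‖w - w‖ + ‖w + w‖ = 4 + 2 * ‖w‖ := by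
        rw [e1, e2, norm_neg, hvv, huu, sub_self, norm_zero, hww]
        ring
      rw [ew]
      have := hlow q
      rw [hsum q] at this
      exact this
    -- the four points are not collinear
    have hncol : ¬ Collinear ℝ (Set.range x) := by
      intro hcol
      rw [collinear_iff_exists_forall_eq_smul_vadd] at hcol
      obtain ⟨p₀, d, hd⟩ := hcol
      obtain ⟨r₀, hr₀⟩ := hd (u + v) ⟨0, by simp [hx]⟩
      obtain ⟨r₁, hr₁⟩ := hd (-(u + v)) ⟨1, by simp [hx]⟩
      obtain ⟨r₂, hr₂⟩ := hd w ⟨2, by simp [hx]⟩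
      have hdiff1 : (u + v) + (u + v) = (r₀ - r₁) • d := by
        have : (u + v) - (-(u + v)) = (r₀ • d +ᵥ p₀) - (r₁ • d +ᵥ p₀) := by
          rw [← hr₀, ← hr₁]
        simp only [vadd_eq_add, add_sub_add_right_eq_sub, sub_neg_eq_add] at this
        rw [this, sub_smul]
      have hdiff2 : v + v = (r₀ - r₂) • d := by
        have : (u + v) - w = (r₀ • d +ᵥ p₀) - (r₂ • d +ᵥ p₀) := by
          rw [← hr₀, ← hr₂]
        simp only [vadd_eq_add, add_sub_add_right_eq_sub] at this
        have e : (u + v) - w = v + v := by rw [hwdef]; abel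
        rw [e] at this
        rw [this, sub_smul]
      have hr01 : r₀ - r₁ ≠ 0 := by
        intro h0
        rw [h0, zero_smul] at hdiff1
        rw [hdiff1, norm_zero] at huv4
        norm_num at huv4
      have hdval : d = (r₀ - r₁)⁻¹ • ((u + v) + (u + v)) := by
        rw [hdiff1, smul_smul, inv_mul_cancel₀ hr01, one_smul]
      rw [hdval, smul_smul] at hdiff2
      set c : ℝ := (r₀ - r₂) * (r₀ - r₁)⁻¹ with hc
      have hcomb : (2 * c) • u + (2 * c - 2) • v = 0 := by
        have : v + v = c • ((u + v) + (u + v)) := hdiff2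
        have e : c • ((u + v) + (u + v)) - (v + v) = (2 * c) • u + (2 * c - 2) • v := by
          module
        rw [← e, ← this, sub_self]
      obtain ⟨h1, h2⟩ := hindep _ _ hcomb
      rw [h1] at h2
      norm_num at h2
    obtain ⟨p, hp⟩ := H 4 x hncol
    rw [hp] at hmem0 hmemw
    rw [Set.mem_singleton_iff] at hmem0 hmemw
    apply huv
    have : w = 0 := by rw [hmemw, ← hmem0]
    rw [hwdef] at this
    exact sub_eq_zero.mp this
  · -- strict convexity → singleton property
    intro H n x hncol
    haveI : StrictConvexSpace ℝ X := by
      refine StrictConvexSpace.of_norm_add_ne_two fun a b ha hb hab h2 => ?_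
      refine H a b ha hb hab ?_
      rintro z ⟨c, d, hc, hd, hcd, rfl⟩
      have hle : ‖c • a + d • b‖ ≤ 1 := by
        calc ‖c • a + d • b‖ ≤ ‖c • a‖ + ‖d • b‖ := norm_add_le _ _
          _ = c + d := by
              rw [norm_smul, norm_smul, ha, hb, Real.norm_of_nonneg hc,
                Real.norm_of_nonneg hd, mul_one, mul_one]
          _ = 1 := hcd
      have hle' : ‖d • a + c • b‖ ≤ 1 := by
        calc ‖d • a + c • b‖ ≤ ‖d • a‖ + ‖c • b‖ := norm_add_le _ _
          _ = d + c := by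
              rw [norm_smul, norm_smul, ha, hb, Real.norm_of_nonneg hc,
                Real.norm_of_nonneg hd, mul_one, mul_one]
          _ = 1 := by linarith
      have hkey : a + b = (c • a + d • b) + (d • a + c • b) := by
        have e : (c • a + d • b) + (d • a + c • b) = (c + d) • a + (c + d) • b := by module
        rw [e, hcd, one_smul, one_smul]
      have hge : 1 ≤ ‖c • a + d • b‖ := by
        have : (2:ℝ) = ‖a + b‖ := h2.symm
        have hb2 : ‖a + b‖ ≤ ‖c • a + d • b‖ + ‖d • a + c • b‖ := by
          rw [hkey]; exact norm_add_le _ _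
        linarith
      exact le_antisymm hle hge
    have hn : n ≠ 0 := by
      rintro rfl
      apply hncol
      rw [Set.range_eq_empty]
      exact collinear_empty ℝ X
    set f : X → ℝ := fun p => ∑ i, ‖p - x i‖ with hf
    have hcont : Continuous f :=
      continuous_finset_sum _ fun i _ => (continuous_id.sub continuous_const).norm
    have hbound : ∀ p : X, ‖p‖ + (-∑ i, ‖x i‖) ≤ f p := by
      intro p
      have h1 : ∑ i : Fin n, (‖p‖ - ‖x i‖) ≤ f p :=
        Finset.sum_le_sum fun i _ => norm_sub_norm_le p (x i)
      have h2 : ∑ i : Fin n, (‖p‖ - ‖x i‖) = n * ‖p‖ - ∑ i, ‖x i‖ := by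
        rw [Finset.sum_sub_distrib, Finset.sum_const, Finset.card_univ, Fintype.card_fin,
          nsmul_eq_mul]
      have h3 : (1:ℝ) ≤ n := by exact_mod_cast Nat.one_le_iff_ne_zero.mpr hn
      nlinarith [norm_nonneg p]
    have hcoer : Filter.Tendsto f (Filter.cocompact X) Filter.atTop :=
      Filter.tendsto_atTop_mono hbound
        (Filter.tendsto_atTop_add_const_right _ _ tendsto_norm_cocompact_atTop)
    obtain ⟨p, hp⟩ := hcont.exists_forall_le hcoer
    refine ⟨p, ?_⟩
    ext z
    simp only [Set.mem_singleton_iff]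
    constructor
    · intro hz
      by_contra hzp
      have hz' : ∀ q, f z ≤ f q := hz
      have hfzp : f z = f p := le_antisymm (hz' p) (hp z)
      set m : X := (2:ℝ)⁻¹ • (z + p) with hm
      have hmid : ∀ i, m - x i = (2:ℝ)⁻¹ • ((z - x i) + (p - x i)) := by
        intro i
        rw [hm]
        module
      have hterm : ∀ i, ‖m - x i‖ ≤ 2⁻¹ * (‖z - x i‖ + ‖p - x i‖) := by
        intro i
        rw [hmid i, norm_smul]
        have h1 := norm_add_le (z - x i) (p - x i)
        have h2 : ‖(2:ℝ)⁻¹‖ = 2⁻¹ := by norm_num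
        rw [h2]
        nlinarith
      have hfm_le : f m ≤ f z := by
        have h1 : f m ≤ ∑ i, 2⁻¹ * (‖z - x i‖ + ‖p - x i‖) :=
          Finset.sum_le_sum fun i _ => hterm i
        have h2 : ∑ i, 2⁻¹ * (‖z - x i‖ + ‖p - x i‖) = 2⁻¹ * (f z + f p) := by
          rw [← Finset.mul_sum, Finset.sum_add_distrib]
        rw [h2, ← hfzp] at h1
        linarith
      have hfm : f m = f z := le_antisymm hfm_le (hz' m)
      have heq : ∀ i, ‖(z - x i) + (p - x i)‖ = ‖z - x i‖ + ‖p - x i‖ := by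
        intro i
        by_contra hne
        have hlt : ‖m - x i‖ < 2⁻¹ * (‖z - x i‖ + ‖p - x i‖) := by
          rw [hmid i, norm_smul]
          have h1 := lt_of_le_of_ne (norm_add_le (z - x i) (p - x i)) hne
          have h2 : ‖(2:ℝ)⁻¹‖ = 2⁻¹ := by norm_num
          rw [h2]
          nlinarith
        have hstrict : f m < ∑ i, 2⁻¹ * (‖z - x i‖ + ‖p - x i‖) :=
          Finset.sum_lt_sum (fun j _ => hterm j) ⟨i, Finset.mem_univ i, hlt⟩
        have h2 : ∑ i, 2⁻¹ * (‖z - x i‖ + ‖p - x i‖) = 2⁻¹ * (f z + f p) := by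
          rw [← Finset.mul_sum, Finset.sum_add_distrib]
        rw [h2, ← hfzp, hfm] at hstrict
        linarith
      apply hncol
      rw [collinear_iff_exists_forall_eq_smul_vadd]
      refine ⟨z, p - z, ?_⟩
      rintro _ ⟨i, rfl⟩
      have hray : SameRay ℝ (z - x i) (p - x i) := sameRay_iff_norm_add.mpr (heq i)
      rcases hray with h0 | h0 | ⟨r, s, hr, hs, hrs⟩
      · refine ⟨0, ?_⟩
        have : x i = z := by rw [← sub_eq_zero]; rw [← neg_sub z (x i), h0, neg_zero]
        rw [this]
        simp
      · refine ⟨1, ?_⟩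
        have : x i = p := by rw [← sub_eq_zero]; rw [← neg_sub p (x i), h0, neg_zero]
        rw [this]
        simp
      · have hrsne : s - r ≠ 0 := by
          intro h0
          have hsr : s = r := by linarith
          rw [hsr] at hrs
          have : z - x i = p - x i := smul_right_injective X (ne_of_gt hr) hrs
          apply hzp
          have := sub_left_injective this
          exact this
        refine ⟨s / (s - r), ?_⟩
        have key : (s - r) • x i = s • p - r • z := by
          linear_combination (norm := module) hrs
        apply smul_right_injective X hrsne
        show (s - r) • x i = (s - r) • ((s / (s - r)) • (p - z) +ᵥ z)
        rw [key]
        simp only [vadd_eq_add]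
        rw [smul_add, smul_smul, mul_div_cancel₀ _ hrsne]
        module
    · rintro rfl
      intro q
      exact hp q
end

section
/- Let x₀, x₁,…,xₙ be points in a finite-dimensional real normed space X with x₀ ≠ xᵢ for all i = 1,…,n. Then x₀ ∈ ft(x₁,…,xₙ) if and only if for each i = 1,…,n there exists a norming functional φᵢ for the vector xᵢ − x₀ such that φ₁ + ⋯ + φₙ = 0. -/
/-!
Minimality of `x₀` says `0 ∈ ∂f(x₀)` for the convex function `f = ∑ i, ‖· - x i‖`, and for
`u ≠ 0` the subdifferential `∂‖·‖(u)` is the set of norming functionals of `u`. The sum rule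
`∂f(x₀) = ∑ i, ∂‖·‖(x i - x₀)` is proved by separation: if `0` is not in this compact convex
set of functionals, then (the space being reflexive) some vector `v` is negative on all of it.
But a limit of norming functionals of `x i - x₀ + t • v` as `t → 0⁺` lies in the set and,
since `x₀ + t • v` is no better than `x₀`, is nonnegative at `v`.
-/

open Filter Topology

theorem mem_ftSet_iff {X : Type*} [NormedAddCommGroup X] {n : ℕ} (x : Fin n → X) (x₀ : X) :
    x₀ ∈ ftSet x ↔ ∀ w, ∑ i, ‖x i - x₀‖ ≤ ∑ i, ‖x i - x₀ + w‖ := by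
  simp only [ftSet, Set.mem_ofPred_eq, norm_sub_rev x₀]
  refine (Equiv.subLeft x₀).forall_congr fun q ↦ ?_
  simp [sub_add_sub_cancel, norm_sub_rev q]

section NormingSet

variable {X : Type*} [NormedAddCommGroup X] [NormedSpace ℝ X]

/-- The subdifferential of the norm at `u`; for `u ≠ 0` its elements are the norming
functionals of `u`. -/
def normingSet (u : X) : Set (StrongDual ℝ X) := {φ | ‖φ‖ ≤ 1 ∧ φ u = ‖u‖}

theorem normingSet_nonempty (u : X) : (normingSet u).Nonempty := by
  obtain ⟨φ, hφ, hφu⟩ := exists_dual_vector'' ℝ u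
  exact ⟨φ, hφ, hφu⟩

theorem apply_le_norm_of_norm_le_one {φ : StrongDual ℝ X} (hφ : ‖φ‖ ≤ 1) (w : X) : φ w ≤ ‖w‖ :=
  (Real.le_norm_self _).trans (by simpa using φ.le_of_opNorm_le hφ w)

theorem mem_normingSet_iff {u : X} {φ : StrongDual ℝ X} (hu : u ≠ 0) :
    φ ∈ normingSet u ↔ ‖φ‖ = 1 ∧ φ u = ‖u‖ := by
  refine ⟨fun hφ ↦ ⟨le_antisymm hφ.1 (le_of_mul_le_mul_right ?_ (norm_pos_iff.2 hu)), hφ.2⟩,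
    fun hφ ↦ ⟨hφ.1.le, hφ.2⟩⟩
  calc 1 * ‖u‖ = φ u := by rw [one_mul, hφ.2]
    _ ≤ ‖φ u‖ := Real.le_norm_self _
    _ ≤ ‖φ‖ * ‖u‖ := φ.le_opNorm u

theorem convex_normingSet (u : X) : Convex ℝ (normingSet u) := by
  have h : normingSet u = Metric.closedBall 0 1 ∩ {φ : StrongDual ℝ X | φ u = ‖u‖} := by
    ext φ
    simp [normingSet]
  rw [h]
  exact (convex_closedBall _ _).inter
    (convex_hyperplane (ContinuousLinearMap.apply ℝ ℝ u).isLinear _)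

theorem isClosed_normingGraph :
    IsClosed {p : X × StrongDual ℝ X | p.2 ∈ normingSet p.1} :=
  (isClosed_le continuous_snd.norm continuous_const).inter
    (isClosed_eq (isBoundedBilinearMap_apply.continuous.comp continuous_swap) continuous_fst.norm)

theorem isClosed_normingSet (u : X) : IsClosed (normingSet u) :=
  isClosed_normingGraph.preimage (Continuous.prodMk_right u)

theorem isCompact_normingSet [FiniteDimensional ℝ X] (u : X) : IsCompact (normingSet u) :=
  (isCompact_closedBall 0 1).of_isClosed_subset (isClosed_normingSet u)
    fun _ hφ ↦ mem_closedBall_zero_iff.2 hφ.1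

theorem StrongDual.exists_eq_apply_of_finiteDimensional [FiniteDimensional ℝ X]
    (f : StrongDual ℝ (StrongDual ℝ X)) : ∃ v : X, ∀ φ : StrongDual ℝ X, f φ = φ v := by
  let g : Module.Dual ℝ (Module.Dual ℝ X) :=
    f.toLinearMap ∘ₗ (LinearMap.toContinuousLinearMap : Module.Dual ℝ X ≃ₗ[ℝ] _).toLinearMap
  exact ⟨(Module.evalEquiv ℝ X).symm g,
    fun φ ↦ (Module.apply_evalEquiv_symm_apply ℝ X (φ : X →ₗ[ℝ] ℝ) g).symm⟩

theorem exists_mem_normingSet_sum_apply_nonneg [FiniteDimensional ℝ X] {ι : Type*} [Fintype ι]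
    {u : ι → X} {v : X} (h : ∀ t : ℝ, 0 < t → ∑ i, ‖u i‖ ≤ ∑ i, ‖u i + t • v‖) :
    ∃ φ : ι → StrongDual ℝ X, (∀ i, φ i ∈ normingSet (u i)) ∧ 0 ≤ ∑ i, φ i v := by
  set t : ℕ → ℝ := fun k ↦ 1 / (k + 1)
  choose ψ hψ using fun k i ↦ normingSet_nonempty (u i + t k • v)
  have hψ_sum : ∀ k, 0 ≤ ∑ i, ψ k i v := by
    intro k
    have hle : ∑ i, ‖u i + t k • v‖ ≤ ∑ i, ‖u i‖ + t k * ∑ i, ψ k i v := by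
      rw [Finset.mul_sum, ← Finset.sum_add_distrib]
      refine Finset.sum_le_sum fun i _ ↦ ?_
      calc ‖u i + t k • v‖ = ψ k i (u i) + t k * ψ k i v := by
            rw [← (hψ k i).2, map_add, map_smul, smul_eq_mul]
        _ ≤ ‖u i‖ + t k * ψ k i v := by
            gcongr
            exact apply_le_norm_of_norm_le_one (hψ k i).1 _
    have := (h (t k) (by positivity)).trans hle
    exact nonneg_of_mul_nonneg_right (by linarith) (by positivity : 0 < t k)
  have hψ_ball : ∀ k, ψ k ∈ Metric.closedBall 0 1 := fun k ↦
    mem_closedBall_zero_iff.2 <| (pi_norm_le_iff_of_nonneg zero_le_one).2 fun i ↦ (hψ k i).1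
  obtain ⟨φ, -, σ, hσ, hψφ⟩ := (isCompact_closedBall _ _).tendsto_subseq hψ_ball
  refine ⟨φ, fun i ↦ ?_, ?_⟩
  · have ht : Tendsto (fun k ↦ t (σ k)) atTop (𝓝 0) :=
      tendsto_one_div_add_atTop_nhds_zero_nat.comp hσ.tendsto_atTop
    have hu : Tendsto (fun k ↦ u i + t (σ k) • v) atTop (𝓝 (u i)) := by
      simpa using tendsto_const_nhds.add (ht.smul_const v)
    have hψφ_i : Tendsto (fun k ↦ ψ (σ k) i) atTop (𝓝 (φ i)) :=
      ((continuous_apply i).tendsto φ).comp hψφ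
    exact isClosed_normingGraph.mem_of_tendsto (hu.prodMk_nhds hψφ_i)
      (Eventually.of_forall fun k ↦ hψ (σ k) i)
  · have hcont : Continuous fun Ψ : ι → StrongDual ℝ X ↦ ∑ i, Ψ i v := by fun_prop
    exact ge_of_tendsto' ((hcont.tendsto φ).comp hψφ) fun k ↦ hψ_sum (σ k)

theorem sum_norm_le_sum_norm_add_of_sum_eq_zero {ι : Type*} [Fintype ι] {u : ι → X}
    {φ : ι → StrongDual ℝ X} (hφ : ∀ i, φ i ∈ normingSet (u i)) (hsum : ∑ i, φ i = 0) (w : X) :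
    ∑ i, ‖u i‖ ≤ ∑ i, ‖u i + w‖ :=
  calc ∑ i, ‖u i‖ = ∑ i, φ i (u i + w) := by
        simp only [map_add, Finset.sum_add_distrib, ← sum_apply, hsum, (hφ _).2]
        simp
    _ ≤ ∑ i, ‖u i + w‖ := Finset.sum_le_sum fun i _ ↦ apply_le_norm_of_norm_le_one (hφ i).1 _

theorem forall_sum_norm_le_sum_norm_add_iff [FiniteDimensional ℝ X] {ι : Type*} [Fintype ι]
    (u : ι → X) : (∀ w, ∑ i, ‖u i‖ ≤ ∑ i, ‖u i + w‖) ↔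
      ∃ φ : ι → StrongDual ℝ X, (∀ i, φ i ∈ normingSet (u i)) ∧ ∑ i, φ i = 0 := by
  refine ⟨fun h ↦ ?_, fun ⟨φ, hφ, hsum⟩ ↦ sum_norm_le_sum_norm_add_of_sum_eq_zero hφ hsum⟩
  set D := (fun Ψ : ι → StrongDual ℝ X ↦ ∑ i, Ψ i) '' Set.univ.pi fun i ↦ normingSet (u i)
  suffices (0 : StrongDual ℝ X) ∈ D by
    obtain ⟨φ, hφ, hsum⟩ := this
    exact ⟨φ, fun i ↦ hφ i trivial, hsum⟩
  by_contra h0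
  have hD_convex : Convex ℝ D := (convex_pi fun i _ ↦ convex_normingSet (u i)).is_linear_image
    ⟨fun _ _ ↦ by simp [Finset.sum_add_distrib], fun _ _ ↦ by simp [Finset.smul_sum]⟩
  have hD_compact : IsCompact D :=
    (isCompact_univ_pi fun i ↦ isCompact_normingSet (u i)).image (by fun_prop)
  obtain ⟨f, c, hfD, hc⟩ := geometric_hahn_banach_closed_point hD_convex hD_compact.isClosed h0
  obtain ⟨v, hv⟩ := StrongDual.exists_eq_apply_of_finiteDimensional f
  obtain ⟨φ, hφ, hφv⟩ := exists_mem_normingSet_sum_apply_nonneg fun t _ ↦ h (t • v)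
  have := hfD _ ⟨φ, fun i _ ↦ hφ i, rfl⟩
  rw [hv, sum_apply] at this
  rw [map_zero] at hc
  linarith

end NormingSet

/-- A point x₀ distinct from all the xᵢ is a Fermat–Torricelli point of x₁, …, xₙ
if and only if each vector xᵢ − x₀ admits a norming functional φᵢ (i.e. ‖φᵢ‖ = 1 and
φᵢ(xᵢ − x₀) = ‖xᵢ − x₀‖) such that φ₁ + ⋯ + φₙ = 0. -/
theorem ft_mem_iff_norming_functionals
    {X : Type*} [NormedAddCommGroup X] [NormedSpace ℝ X] [FiniteDimensional ℝ X]
    {n : ℕ} (x₀ : X) (x : Fin n → X) (hne : ∀ i, x₀ ≠ x i) :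
    x₀ ∈ ftSet x ↔
      ∃ φ : Fin n → (X →L[ℝ] ℝ),
        (∀ i, ‖φ i‖ = 1 ∧ φ i (x i - x₀) = ‖x i - x₀‖) ∧ ∑ i, φ i = 0 := by
  rw [mem_ftSet_iff, forall_sum_norm_le_sum_norm_add_iff]
  simp only [fun i ↦ mem_normingSet_iff (sub_ne_zero.2 (hne i).symm)]
end

section
/- Let x₁,…,xₙ be points in a finite-dimensional real normed space X and let p ∈ ft(x₁,…,xₙ) with p ≠ xᵢ for all i. Suppose that for each i, φᵢ is a norming functional for xᵢ − p and φ₁ + ⋯ + φₙ = 0. Then ft(x₁,…,xₙ) = ⋂ᵢ C(xᵢ, φᵢ), where C(x, φ) = {x − a : a ∈ X, φ(a) = ‖a‖}. -/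
/-- The cone C(x, φ) = {x − a : φ(a) = ‖a‖}. -/
def ftCone {X : Type*} [NormedAddCommGroup X] [NormedSpace ℝ X]
    (x : X) (φ : X →L[ℝ] ℝ) : Set X :=
  {y | ∃ a : X, φ a = ‖a‖ ∧ y = x - a}

/-- If p is a Fermat–Torricelli point of x₁, …, xₙ distinct from all xᵢ, and the φᵢ are
norming functionals for xᵢ − p summing to zero, then the Fermat–Torricelli set equals
the intersection of the cones C(xᵢ, φᵢ). -/
theorem ft_eq_inter_cones
    {X : Type*} [NormedAddCommGroup X] [NormedSpace ℝ X] [FiniteDimensional ℝ X]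
    {n : ℕ} (x : Fin n → X) (p : X) (hp : p ∈ ftSet x) (hne : ∀ i, p ≠ x i)
    (φ : Fin n → (X →L[ℝ] ℝ))
    (hnorming : ∀ i, ‖φ i‖ = 1 ∧ φ i (x i - p) = ‖x i - p‖)
    (hsum : ∑ i, φ i = 0) :
    ftSet x = ⋂ i, ftCone (x i) (φ i) := by
  have hbound : ∀ i (z : X), φ i (x i - z) ≤ ‖x i - z‖ := by
    intro i z
    calc φ i (x i - z) ≤ ‖φ i (x i - z)‖ := le_abs_self _
      _ ≤ ‖φ i‖ * ‖x i - z‖ := (φ i).le_opNorm _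
      _ = ‖x i - z‖ := by rw [(hnorming i).1, one_mul]
  have hsumz : ∀ z : X, ∑ i, (φ i) z = 0 := by
    intro z
    have := congrArg (fun f : X →L[ℝ] ℝ => f z) hsum
    simpa using this
  have hval : ∀ z : X, ∑ i, φ i (x i - z) = ∑ i, φ i (x i - p) := by
    intro z
    simp only [map_sub, Finset.sum_sub_distrib, hsumz, sub_zero]
  have hpval : ∑ i, ‖p - x i‖ = ∑ i, φ i (x i - p) := by
    apply Finset.sum_congr rfl
    intro i _
    rw [norm_sub_rev]
    exact (hnorming i).2.symm
  have hlow : ∀ z : X, ∑ i, φ i (x i - p) ≤ ∑ i, ‖z - x i‖ := by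
    intro z
    rw [← hval z]
    apply Finset.sum_le_sum
    intro i _
    calc φ i (x i - z) ≤ ‖x i - z‖ := hbound i z
      _ = ‖z - x i‖ := norm_sub_rev _ _
  ext q
  simp only [Set.mem_iInter, ftCone, Set.mem_setOf_eq]
  constructor
  · intro hq i
    have h1 : ∑ i, ‖q - x i‖ ≤ ∑ i, φ i (x i - p) := (hq p).trans_eq hpval
    have h2 : ∑ i, (‖x i - q‖ - φ i (x i - q)) = 0 := by
      have hge := hlow q
      have : ∑ i, (‖x i - q‖ - φ i (x i - q))
          = ∑ i, ‖q - x i‖ - ∑ i, φ i (x i - p) := by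
        rw [Finset.sum_sub_distrib, hval q]
        congr 1
        exact Finset.sum_congr rfl fun i _ => norm_sub_rev _ _
      linarith [this]
    have heach : ∀ i ∈ Finset.univ, ‖x i - q‖ - φ i (x i - q) = 0 :=
      (Finset.sum_eq_zero_iff_of_nonneg (fun i _ => by
        have := hbound i q; linarith)).mp h2
    have hi := heach i (Finset.mem_univ i)
    exact ⟨x i - q, by linarith, by abel⟩
  · intro hq q'
    have hvq : ∑ i, ‖q - x i‖ = ∑ i, φ i (x i - p) := by
      rw [← hval q]
      apply Finset.sum_congr rfl
      intro i _
      obtain ⟨a, ha, haq⟩ := hq i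
      have : a = x i - q := by rw [haq]; abel
      rw [this] at ha
      rw [norm_sub_rev, ← ha]
    rw [hvq]
    exact hlow q'
end

section
/- Let x₁,…,xₙ be points in a two-dimensional real normed space X. Then ft(x₁,…,xₙ) is a convex polygon that may degenerate to a segment or a point; that is, ft(x₁,…,xₙ) equals the convex hull of a finite nonempty set of points of X. -/
/-!
The Fermat–Torricelli set `M` is the set of minimizers of the coercive convex function
`p ↦ ∑ ‖p - xᵢ‖`, so it is nonempty, compact and convex, and by Krein–Milman it is the convex hull
of its extreme points as soon as these are finitely many.

If `M` has empty interior, it lies on a line and has at most two extreme points. Otherwise pick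
`u` in the interior of `M` different from all `xᵢ`, and norming functionals `Lᵢ` of `u - xᵢ`.
Each `‖· - xᵢ‖` is affine on `M` (the sum is constant there and every term is convex), and `u`
lies inside a segment of `M` through any `p ∈ M`, so `Lᵢ (p - xᵢ) = ‖p - xᵢ‖` on all of `M`.
Hence `M` is the intersection of the cones `xᵢ + {v | Lᵢ v = ‖v‖}` with one half-plane. In the
plane each such cone is cut out by finitely many half-planes, so `M` is a polyhedron, and a planar
polyhedron has finitely many extreme points: each is the only common point of two active
constraints with independent normals.
-/

open Set Module Filter Topology

section Geometry

variable {X : Type*} [NormedAddCommGroup X] [NormedSpace ℝ X]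

def IsPolyhedral (P : Set X) : Prop :=
  ∃ s : Finset ((X →L[ℝ] ℝ) × ℝ), P = {p | ∀ φ ∈ s, φ.1 p ≤ φ.2}

theorem isPolyhedral_setOf_le (φ : X →L[ℝ] ℝ) (c : ℝ) : IsPolyhedral {p : X | φ p ≤ c} :=
  ⟨{(φ, c)}, by simp⟩

theorem IsPolyhedral.inter {P Q : Set X} (hP : IsPolyhedral P) (hQ : IsPolyhedral Q) :
    IsPolyhedral (P ∩ Q) := by
  classical
  obtain ⟨s, rfl⟩ := hP
  obtain ⟨t, rfl⟩ := hQ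
  exact ⟨s ∪ t, by ext p; simp [or_imp, forall_and]⟩

theorem isPolyhedral_setOf_eq (φ : X →L[ℝ] ℝ) (c : ℝ) : IsPolyhedral {p : X | φ p = c} := by
  convert (isPolyhedral_setOf_le φ c).inter (isPolyhedral_setOf_le (-φ) (-c)) using 1
  ext p
  simp [le_antisymm_iff]

theorem isPolyhedral_iInter {ι : Type*} [Fintype ι] {P : ι → Set X}
    (hP : ∀ i, IsPolyhedral (P i)) : IsPolyhedral (⋂ i, P i) := by
  classical
  choose s hs using hP
  refine ⟨Finset.univ.biUnion s, ?_⟩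
  ext p
  simp only [hs, mem_iInter, mem_ofPred_eq, Finset.mem_biUnion, Finset.mem_univ, true_and,
    forall_exists_index]
  exact forall_comm

theorem IsPolyhedral.preimage_sub_const {P : Set X} (hP : IsPolyhedral P) (x : X) :
    IsPolyhedral ((· - x) ⁻¹' P) := by
  classical
  obtain ⟨s, rfl⟩ := hP
  refine ⟨s.image fun φ => (φ.1, φ.2 + φ.1 x), ?_⟩
  ext p
  simp only [mem_preimage, mem_ofPred_eq, Finset.forall_mem_image, map_sub, sub_le_iff_le_add]

theorem isPolyhedral_singleton_zero [FiniteDimensional ℝ X] : IsPolyhedral ({0} : Set X) := by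
  let b := Module.finBasis ℝ X
  convert isPolyhedral_iInter fun j => isPolyhedral_setOf_eq (b.coord j).toContinuousLinearMap 0
  ext p
  simpa using b.forall_coord_eq_zero_iff.symm

theorem exists_ne_zero_ker_eq_span (hdim : finrank ℝ X = 2) {φ : X →L[ℝ] ℝ} (hφ : φ ≠ 0) :
    ∃ d : X, d ≠ 0 ∧ LinearMap.ker (φ : X →ₗ[ℝ] ℝ) = ℝ ∙ d := by
  have : FiniteDimensional ℝ X := .of_finrank_eq_succ hdim
  have hker : finrank ℝ (LinearMap.ker (φ : X →ₗ[ℝ] ℝ)) = 1 := by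
    have := Module.Dual.finrank_ker_add_one_of_ne_zero (ContinuousLinearMap.coe_injective.ne hφ)
    omega
  obtain ⟨d, hd, hd0⟩ := Submodule.exists_mem_ne_zero_of_ne_bot
    (Submodule.one_le_finrank_iff.1 hker.ge)
  exact ⟨d, hd0, eq_span_singleton_of_mem_of_finrank_eq_one hker hd hd0⟩

theorem exists_ne_zero_forall_apply_eq_zero (hdim : finrank ℝ X = 2) {ι : Type*}
    (φ : ι → X →L[ℝ] ℝ) (h : ∀ i j, ∃ v ≠ 0, φ i v = 0 ∧ φ j v = 0) :
    ∃ v ≠ 0, ∀ i, φ i v = 0 := by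
  by_cases hzero : ∀ i, φ i = 0
  · have : Nontrivial X := nontrivial_of_finrank_eq_succ hdim
    obtain ⟨v, hv⟩ := exists_ne (0 : X)
    exact ⟨v, hv, fun i => by simp [hzero i]⟩
  push Not at hzero
  obtain ⟨i, hi⟩ := hzero
  obtain ⟨d, hd, hker⟩ := exists_ne_zero_ker_eq_span hdim hi
  refine ⟨d, hd, fun j => ?_⟩
  obtain ⟨v, hv, hiv, hjv⟩ := h i j
  have hv_ker : v ∈ LinearMap.ker (φ i : X →ₗ[ℝ] ℝ) := hiv
  obtain ⟨t, rfl⟩ := Submodule.mem_span_singleton.1 (hker ▸ hv_ker)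
  rw [map_smul, smul_eq_mul] at hjv
  exact (mul_eq_zero.1 hjv).resolve_left (left_ne_zero_of_smul hv)

theorem eq_zero_of_mem_extremePoints_setOf_le {s : Finset ((X →L[ℝ] ℝ) × ℝ)} {e v : X}
    (he : e ∈ {p | ∀ φ ∈ s, φ.1 p ≤ φ.2}.extremePoints ℝ)
    (hv : ∀ φ ∈ s, φ.1 e = φ.2 → φ.1 v = 0) : v = 0 := by
  have hnear : ∀ᶠ t : ℝ in 𝓝 0, ∀ φ ∈ s, φ.1 (e + t • v) ≤ φ.2 := by
    refine (eventually_all_finset s).2 fun φ hφ => ?_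
    rcases (he.1 φ hφ).eq_or_lt with h | h
    · exact .of_forall fun t => by simp [hv φ hφ h, h]
    · have : Continuous fun t : ℝ => φ.1 (e + t • v) := by fun_prop
      exact ((this.tendsto 0).eventually (gt_mem_nhds (by simpa using h))).mono fun _ => le_of_lt
  obtain ⟨ε, hε, hball⟩ := Metric.eventually_nhds_iff.1 hnear
  have hmem : ∀ t : ℝ, |t| < ε → e + t • v ∈ {p | ∀ φ ∈ s, φ.1 p ≤ φ.2} :=
    fun t ht => hball (by simpa using ht)
  have hmid : e ∈ openSegment ℝ (e + (-(ε / 2)) • v) (e + (ε / 2) • v) :=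
    ⟨1 / 2, 1 / 2, by norm_num, by norm_num, by norm_num, by module⟩
  have := he.2 (hmem _ (by rw [abs_neg, abs_of_pos (half_pos hε)]; linarith))
    (hmem _ (by rw [abs_of_pos (half_pos hε)]; linarith)) hmid
  simpa [hε.ne'] using this

theorem IsPolyhedral.finite_extremePoints (hdim : finrank ℝ X = 2) {P : Set X}
    (hP : IsPolyhedral P) : (P.extremePoints ℝ).Finite := by
  obtain ⟨s, rfl⟩ := hP
  let vertex (φψ : ((X →L[ℝ] ℝ) × ℝ) × ((X →L[ℝ] ℝ) × ℝ)) : Set X :=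
    {p | φψ.1.1 p = φψ.1.2 ∧ φψ.2.1 p = φψ.2.2 ∧ ∀ v, φψ.1.1 v = 0 → φψ.2.1 v = 0 → v = 0}
  have hvertex : ∀ φψ, (vertex φψ).Subsingleton := fun φψ p hp q hq =>
    sub_eq_zero.1 <| hp.2.2 _ (by simp [hp.1, hq.1]) (by simp [hp.2.1, hq.2.1])
  refine ((s ×ˢ s).finite_toSet.biUnion fun φψ _ => (hvertex φψ).finite).subset fun e he => ?_
  by_contra hne
  simp only [mem_iUnion, Finset.mem_coe, Finset.mem_product, exists_prop, not_exists,
    not_and] at hne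
  let active := {φ // φ ∈ s ∧ φ.1 e = φ.2}
  obtain ⟨v, hv, hker⟩ := exists_ne_zero_forall_apply_eq_zero hdim (fun φ : active => φ.1.1)
    fun φ ψ => by
      by_contra! h
      exact hne (φ.1, ψ.1) ⟨φ.2.1, ψ.2.1⟩
        ⟨φ.2.2, ψ.2.2, fun v hφ hψ => by_contra fun hv => h v hv hφ hψ⟩
  exact hv (eq_zero_of_mem_extremePoints_setOf_le he fun φ hφ he => hker ⟨φ, hφ, he⟩)

theorem exists_dual_coord_of_ker_eq_span {L : X →L[ℝ] ℝ} {c d : X} (hc : L c = 1)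
    (hker : LinearMap.ker (L : X →ₗ[ℝ] ℝ) = ℝ ∙ d) (hd : d ≠ 0) :
    ∃ τ : X →L[ℝ] ℝ, τ c = 0 ∧ τ d = 1 ∧ ∀ v, L v • c + τ v • d = v := by
  obtain ⟨τ, hτ⟩ := SeparatingDual.exists_eq_one (R := ℝ) hd
  have hLd : L d = 0 := by simpa using hker.ge (Submodule.mem_span_singleton_self d)
  refine ⟨τ - τ c • L, by simp [hc], by simp [hτ, hLd], fun v => ?_⟩
  have hw : v - L v • c ∈ LinearMap.ker (L : X →ₗ[ℝ] ℝ) := by simp [hc]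
  rw [hker] at hw
  obtain ⟨t, ht⟩ := Submodule.mem_span_singleton.1 hw
  have ht' : t = (τ - τ c • L) v := by
    have := congrArg (τ - τ c • L) ht
    simp [hτ, hLd, hc] at this
    simp [this, mul_comm]
  rw [← ht', ht]
  abel

theorem convex_setOf_apply_eq_norm {L : X →L[ℝ] ℝ} (hL : ∀ v, L v ≤ ‖v‖) :
    Convex ℝ {v : X | L v = ‖v‖} := by
  intro v (hv : L v = ‖v‖) w (hw : L w = ‖w‖) a b ha hb hab
  refine le_antisymm (hL _) ?_
  calc ‖a • v + b • w‖ ≤ a • ‖v‖ + b • ‖w‖ := convexOn_univ_norm.2 trivial trivial ha hb hab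
    _ = L (a • v + b • w) := by simp [hv, hw]

theorem exists_forall_apply_add_smul_eq_norm_iff_mem_Icc {L τ : X →L[ℝ] ℝ}
    (hL : ∀ v, L v ≤ ‖v‖) {c d : X} (hc : L c = 1) (hcn : ‖c‖ = 1) (hLd : L d = 0)
    (hτc : τ c = 0) (hτd : τ d = 1) :
    ∃ α β : ℝ, ∀ t, L (c + t • d) = ‖c + t • d‖ ↔ t ∈ Icc α β := by
  let T := {t : ℝ | L (c + t • d) = ‖c + t • d‖}
  have hTcompact : IsCompact T := by
    refine Metric.isCompact_of_isClosed_isBounded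
      ((isClosed_eq L.continuous continuous_norm).preimage (by fun_prop))
      ((Metric.isBounded_closedBall (x := 0) (r := ‖τ‖)).subset fun t (ht : _ = _) => ?_)
    have hnorm : ‖c + t • d‖ = 1 := by simp [← ht, hc, hLd]
    have hτt : τ (c + t • d) = t := by simp [hτc, hτd]
    simpa [hτt, hnorm] using τ.le_opNorm (c + t • d)
  have hTconvex : Convex ℝ T := by
    intro t₁ h₁ t₂ h₂ a b ha hb hab
    have hcombo : c + (a • t₁ + b • t₂) • d = a • (c + t₁ • d) + b • (c + t₂ • d) := by
      conv_lhs => rw [← Convex.combo_self hab c]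
      module
    show L _ = ‖_‖
    rw [hcombo]
    exact convex_setOf_apply_eq_norm hL h₁ h₂ ha hb hab
  have h0 : (0 : ℝ) ∈ T := by simp [T, hc, hcn]
  exact ⟨_, _, fun t => Set.ext_iff.1
    (eq_Icc_of_connected_compact ⟨⟨0, h0⟩, hTconvex.isPreconnected⟩ hTcompact) t⟩

theorem isPolyhedral_setOf_apply_eq_norm (hdim : finrank ℝ X = 2) {L : X →L[ℝ] ℝ}
    (hL : ∀ v, L v ≤ ‖v‖) : IsPolyhedral {v : X | L v = ‖v‖} := by
  have : FiniteDimensional ℝ X := .of_finrank_eq_succ hdim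
  have hsmul_iff : ∀ {r : ℝ} (v : X), 0 < r → (L (r • v) = ‖r • v‖ ↔ L v = ‖v‖) :=
    fun v hr => by simp [norm_smul, abs_of_pos hr, hr.ne']
  by_cases hC : ∃ c, L c = 1 ∧ ‖c‖ = 1
  swap
  · convert (isPolyhedral_singleton_zero : IsPolyhedral ({0} : Set X))
    refine eq_singleton_iff_unique_mem.2 ⟨by simp, fun v (hv : L v = ‖v‖) => by_contra fun h0 => ?_⟩
    have hv0 : 0 < ‖v‖ := norm_pos_iff.2 h0
    exact hC ⟨‖v‖⁻¹ • v, by simp [hv, hv0.ne'], by simp [norm_smul, hv0.ne']⟩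
  obtain ⟨c, hc, hcn⟩ := hC
  obtain ⟨d, hd, hker⟩ := exists_ne_zero_ker_eq_span hdim (φ := L) (by rintro rfl; simp at hc)
  have hLd : L d = 0 := by simpa using hker.ge (Submodule.mem_span_singleton_self d)
  obtain ⟨τ, hτc, hτd, hdecomp⟩ := exists_dual_coord_of_ker_eq_span hc hker hd
  obtain ⟨α, β, hαβ⟩ :=
    exists_forall_apply_add_smul_eq_norm_iff_mem_Icc hL hc hcn hLd hτc hτd
  -- in the coordinates `(L, τ)` the cone is `{v | 0 ≤ L v ∧ α * L v ≤ τ v ≤ β * L v}`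
  convert ((isPolyhedral_setOf_le (-L) 0).inter (isPolyhedral_setOf_le (α • L - τ) 0)).inter
    (isPolyhedral_setOf_le (τ - β • L) 0) using 1
  ext v
  simp only [mem_inter_iff, mem_ofPred_eq, neg_apply, sub_apply, smul_apply, smul_eq_mul,
    neg_nonpos, sub_nonpos]
  rcases lt_trichotomy (L v) 0 with hneg | hzero | hpos
  · simp only [hneg.not_ge, false_and, iff_false]
    exact fun h => hneg.not_ge (h ▸ norm_nonneg v)
  · have hv : v = τ v • d := by simpa [hzero] using (hdecomp v).symm
    simp only [hzero, mul_zero, le_refl, true_and, ← le_antisymm_iff, eq_comm (a := (0 : ℝ)),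
      norm_eq_zero]
    constructor
    · rintro rfl
      simp
    · intro h
      rw [hv, h, zero_smul]
  · have hv : L v • (c + (τ v / L v) • d) = v := by
      rw [smul_add, smul_smul, mul_div_cancel₀ _ hpos.ne', hdecomp]
    conv_lhs => rw [← hv, hsmul_iff _ hpos, hαβ, mem_Icc, le_div_iff₀ hpos, div_le_iff₀ hpos]
    simp only [hpos.le, true_and]

theorem Collinear.finite_extremePoints {K : Set X} (hK : Collinear ℝ K) :
    (K.extremePoints ℝ).Finite := by
  classical
  by_contra hinf
  obtain ⟨t, ht, hcard⟩ := Set.Infinite.exists_subset_card_eq hinf 3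
  obtain ⟨a, b, c, hab, hac, hbc, rfl⟩ := Finset.card_eq_three.1 hcard
  simp only [Finset.coe_insert, Finset.coe_singleton, insert_subset_iff,
    singleton_subset_iff] at ht
  obtain ⟨ha, hb, hc⟩ := ht
  have not_wbtw : ∀ {p q r : X}, p ∈ K.extremePoints ℝ → q ∈ K.extremePoints ℝ →
      r ∈ K.extremePoints ℝ → p ≠ q → q ≠ r → ¬ Wbtw ℝ p q r := fun hp hq hr hpq hqr hw =>
    hpq (hq.2 hp.1 hr.1 (mem_openSegment_of_ne_left_right hpq hqr.symm
      (mem_segment_iff_wbtw.2 hw)))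
  rcases (hK.subset (by simp [insert_subset_iff, ha.1, hb.1, hc.1] :
    ({a, b, c} : Set X) ⊆ K)).wbtw_or_wbtw_or_wbtw with h | h | h
  · exact not_wbtw ha hb hc hab hbc h
  · exact not_wbtw hb hc ha hbc hac.symm h
  · exact not_wbtw hc ha hb hac.symm hab h

theorem Convex.collinear_of_interior_eq_empty (hdim : finrank ℝ X = 2) {s : Set X}
    (hs : Convex ℝ s) (h : interior s = ∅) : Collinear ℝ s := by
  have : FiniteDimensional ℝ X := .of_finrank_eq_succ hdim
  rcases s.eq_empty_or_nonempty with rfl | hne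
  · exact collinear_empty ℝ X
  have hspan : vectorSpan ℝ s ≠ ⊤ := by
    rw [ne_eq, ← AffineSubspace.affineSpan_eq_top_iff_vectorSpan_eq_top_of_nonempty ℝ X X hne,
      ← hs.interior_nonempty_iff_affineSpan_eq_top, h]
    exact not_nonempty_empty
  have := Submodule.finrank_lt hspan
  rw [collinear_iff_finrank_le_one]
  omega

theorem exists_mem_openSegment_of_mem_interior {s : Set X} {u : X} (hu : u ∈ interior s)
    (p : X) : ∃ q ∈ s, u ∈ openSegment ℝ p q := by
  have hnear : ∀ᶠ t in 𝓝 (1 : ℝ), AffineMap.lineMap p u t ∈ s :=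
    (AffineMap.lineMap_continuous.tendsto' 1 u (by simp)).eventually
      (mem_interior_iff_mem_nhds.1 hu)
  obtain ⟨t, ht1, hts⟩ := hnear.exists_gt
  refine ⟨_, hts, ?_⟩
  rw [openSegment_eq_image_lineMap]
  exact ⟨t⁻¹, ⟨by positivity, inv_lt_one_of_one_lt₀ ht1⟩, by
    simp [AffineMap.lineMap_lineMap_right, inv_mul_cancel₀ (by positivity : t ≠ 0)]⟩

theorem smul_add_smul_sub_eq {a b : ℝ} (hab : a + b = 1) (p q y : X) :
    a • p + b • q - y = a • (p - y) + b • (q - y) := by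
  conv_lhs => rw [← Convex.combo_self hab y]
  module

theorem norm_smul_add_smul_sub_le {p q : X} {a b : ℝ} (ha : 0 ≤ a) (hb : 0 ≤ b)
    (hab : a + b = 1) (y : X) :
    ‖a • p + b • q - y‖ ≤ a * ‖p - y‖ + b * ‖q - y‖ := by
  rw [smul_add_smul_sub_eq hab]
  exact convexOn_univ_norm.2 trivial trivial ha hb hab

end Geometry

section FermatTorricelli

variable {X : Type*} [NormedAddCommGroup X] {n : ℕ} (x : Fin n → X)

theorem isClosed_ftSet : IsClosed (ftSet x) := by
  simp only [ftSet, ofPred_forall]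
  exact isClosed_iInter fun q => isClosed_le (by fun_prop) continuous_const

theorem ftSet_subset_closedBall (i : Fin n) :
    ftSet x ⊆ Metric.closedBall (x i) (∑ j, ‖x i - x j‖) := fun p hp => by
  rw [Metric.mem_closedBall, dist_eq_norm]
  exact (Finset.single_le_sum (fun j _ => norm_nonneg (p - x j)) (Finset.mem_univ i)).trans
    (hp _)

theorem ftSet_nonempty [ProperSpace X] (hn : 0 < n) : (ftSet x).Nonempty := by
  have hcoercive : Tendsto (fun p => ∑ i, ‖p - x i‖) (cocompact X) atTop := by
    refine tendsto_atTop_mono (fun p => Finset.single_le_sum (fun j _ => norm_nonneg (p - x j))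
      (Finset.mem_univ ⟨0, hn⟩)) ?_
    simpa [dist_eq_norm] using tendsto_dist_right_cocompact_atTop (x ⟨0, hn⟩)
  exact Continuous.exists_forall_le (by fun_prop) hcoercive

theorem isCompact_ftSet [ProperSpace X] (hn : 0 < n) : IsCompact (ftSet x) :=
  (isCompact_closedBall _ _).of_isClosed_subset (isClosed_ftSet x)
    (ftSet_subset_closedBall x ⟨0, hn⟩)

variable [NormedSpace ℝ X]

theorem convex_ftSet : Convex ℝ (ftSet x) := by
  intro p hp q hq a b ha hb hab r
  calc ∑ i, ‖a • p + b • q - x i‖ ≤ ∑ i, (a * ‖p - x i‖ + b * ‖q - x i‖) :=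
        Finset.sum_le_sum fun i _ => norm_smul_add_smul_sub_le ha hb hab (x i)
    _ = a * ∑ i, ‖p - x i‖ + b * ∑ i, ‖q - x i‖ := by
        rw [Finset.sum_add_distrib, Finset.mul_sum, Finset.mul_sum]
    _ ≤ a * ∑ i, ‖r - x i‖ + b * ∑ i, ‖r - x i‖ :=
        add_le_add (mul_le_mul_of_nonneg_left (hp r) ha) (mul_le_mul_of_nonneg_left (hq r) hb)
    _ = ∑ i, ‖r - x i‖ := by rw [← add_mul, hab, one_mul]

theorem norm_smul_add_smul_sub_eq_of_mem_ftSet {p q : X} (hp : p ∈ ftSet x) (hq : q ∈ ftSet x)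
    {a b : ℝ} (ha : 0 ≤ a) (hb : 0 ≤ b) (hab : a + b = 1) (i : Fin n) :
    ‖a • p + b • q - x i‖ = a * ‖p - x i‖ + b * ‖q - x i‖ := by
  have hpq := le_antisymm (hp q) (hq p)
  have hcombo := le_antisymm (convex_ftSet x hp hq ha hb hab p) (hp _)
  refine (Finset.sum_eq_sum_iff_of_le fun j _ => norm_smul_add_smul_sub_le ha hb hab (x j)).1 ?_
    i (Finset.mem_univ i)
  rw [Finset.sum_add_distrib, ← Finset.mul_sum, ← Finset.mul_sum, hcombo, ← hpq, ← add_mul, hab,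
    one_mul]

theorem apply_sub_eq_norm_of_mem_ftSet {u p : X} (hu : u ∈ interior (ftSet x))
    (hp : p ∈ ftSet x) {L : X →L[ℝ] ℝ} (hL : ∀ v, L v ≤ ‖v‖) {i : Fin n}
    (hLu : L (u - x i) = ‖u - x i‖) : L (p - x i) = ‖p - x i‖ := by
  obtain ⟨q, hq, a, b, ha, hb, hab, rfl⟩ := exists_mem_openSegment_of_mem_interior hu p
  have hnorm := norm_smul_add_smul_sub_eq_of_mem_ftSet x hp hq ha.le hb.le hab i
  rw [smul_add_smul_sub_eq hab, map_add, map_smul, map_smul, smul_eq_mul, smul_eq_mul] at hLu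
  rw [smul_add_smul_sub_eq hab] at hnorm
  refine le_antisymm (hL _) ?_
  nlinarith [hL (p - x i), hL (q - x i)]

theorem ftSet_eq_of_mem_interior {u : X} (hu : u ∈ interior (ftSet x))
    (L : Fin n → X →L[ℝ] ℝ) (hL : ∀ i v, L i v ≤ ‖v‖) (hLu : ∀ i, L i (u - x i) = ‖u - x i‖) :
    ftSet x = {p | (∀ i, L i (p - x i) = ‖p - x i‖) ∧ ∑ i, L i (p - x i) ≤ ∑ i, ‖u - x i‖} := by
  ext p
  constructor
  · intro hp
    have heq i := apply_sub_eq_norm_of_mem_ftSet x hu hp (hL i) (hLu i)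
    exact ⟨heq, by simpa only [heq] using hp u⟩
  · rintro ⟨heq, hle⟩ q
    simp only [heq] at hle
    exact hle.trans (interior_subset hu q)

theorem isPolyhedral_ftSet (hdim : finrank ℝ X = 2) (h : (interior (ftSet x)).Nonempty) :
    IsPolyhedral (ftSet x) := by
  have : Nontrivial X := nontrivial_of_finrank_eq_succ hdim
  obtain ⟨u₀, hu₀⟩ := h
  obtain ⟨u, hu, hux⟩ : (interior (ftSet x) \ range x).Nonempty :=
    ((infinite_of_mem_nhds u₀ (isOpen_interior.mem_nhds hu₀)).sdiff (finite_range x)).nonempty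
  choose L hL1 hLu using fun i => exists_dual_vector ℝ (u - x i)
    (norm_ne_zero_iff.2 (sub_ne_zero.2 fun h => hux ⟨i, h.symm⟩))
  have hL : ∀ i v, L i v ≤ ‖v‖ := fun i v =>
    (Real.le_norm_self _).trans ((L i).le_opNorm v |>.trans_eq (by rw [hL1, one_mul]))
  rw [ftSet_eq_of_mem_interior x hu L hL hLu]
  convert (isPolyhedral_iInter fun i =>
      (isPolyhedral_setOf_apply_eq_norm hdim (hL i)).preimage_sub_const (x i)).inter
    (isPolyhedral_setOf_le (∑ i, L i) (∑ i, ‖u - x i‖ + ∑ i, L i (x i))) using 1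
  ext p
  simp [Finset.sum_sub_distrib]

theorem finite_extremePoints_ftSet (hdim : finrank ℝ X = 2) :
    ((ftSet x).extremePoints ℝ).Finite := by
  rcases (interior (ftSet x)).eq_empty_or_nonempty with h | h
  · exact ((convex_ftSet x).collinear_of_interior_eq_empty hdim h).finite_extremePoints
  · exact (isPolyhedral_ftSet x hdim h).finite_extremePoints hdim

end FermatTorricelli

/-- In a two-dimensional real normed space, the Fermat–Torricelli set of finitely many
points is a convex polygon, possibly degenerating to a segment or a point: it is the
convex hull of a finite nonempty set of points. -/
theorem ft_is_convex_polygon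
    {X : Type*} [NormedAddCommGroup X] [NormedSpace ℝ X]
    (hdim : Module.finrank ℝ X = 2)
    {n : ℕ} (hn : 0 < n) (x : Fin n → X) :
    ∃ S : Set X, S.Finite ∧ S.Nonempty ∧ ftSet x = convexHull ℝ S := by
  have : FiniteDimensional ℝ X := .of_finrank_eq_succ hdim
  have hcompact := isCompact_ftSet x hn
  have hfinite := finite_extremePoints_ftSet x hdim
  refine ⟨_, hfinite, hcompact.extremePoints_nonempty (ftSet_nonempty x hn), ?_⟩
  rw [← (hfinite.isClosed_convexHull (𝕜 := ℝ)).closure_eq,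
    closure_convexHull_extremePoints hcompact (convex_ftSet x)]
end

section
/- Let x₁, x₂, x₃ be points in a normed plane X, let p ∈ ft(x₁, x₂, x₃) with p ≠ xᵢ for all i, and let φ₁, φ₂, φ₃ be norming functionals for x₁ − p, x₂ − p, x₃ − p respectively with φ₁ + φ₂ + φ₃ = 0. If ft(x₁, x₂, x₃) has nonempty interior (i.e., is a non-degenerate polygon), then for each i the set {a ∈ X : φᵢ(a) = ‖a‖} contains two linearly independent vectors (i.e., each cone C(xᵢ, φᵢ) is a non-degenerate angle rather than a ray). -/
private lemma phi_le_norm {X : Type*} [NormedAddCommGroup X] [NormedSpace ℝ X]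
    (φ : X →L[ℝ] ℝ) (hφ : ‖φ‖ = 1) (a : X) : φ a ≤ ‖a‖ := by
  have h := φ.le_opNorm a
  rw [hφ, one_mul, Real.norm_eq_abs] at h
  exact (le_abs_self _).trans h

/-- Among `v`, `v - ε • e₁`, `v - ε • e₂` there are two linearly independent vectors. -/
private lemma exists_pair_li {X : Type*} [AddCommGroup X] [Module ℝ X]
    (e₁ e₂ : X) (he : LinearIndependent ℝ ![e₁, e₂]) (v : X) (ε : ℝ) (hε : ε ≠ 0) :
    LinearIndependent ℝ ![v - ε • e₁, v - ε • e₂] ∨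
    LinearIndependent ℝ ![v - ε • e₁, v] ∨ LinearIndependent ℝ ![v - ε • e₂, v] := by
  rw [linearIndependent_fin2] at he
  simp only [Matrix.cons_val_one, Matrix.head_cons, Matrix.cons_val_zero] at he
  by_cases hv : v = 0
  · left
    rw [linearIndependent_fin2]
    simp only [Matrix.cons_val_one, Matrix.head_cons, Matrix.cons_val_zero, hv, zero_sub]
    refine ⟨neg_ne_zero.mpr (smul_ne_zero hε he.1), fun a h => he.2 a ?_⟩
    have h' : ε • (a • e₂) = ε • e₁ := by
      rw [smul_comm]
      have := neg_injective (by simpa [smul_neg] using h)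
      exact this
    exact smul_right_injective X hε h'
  · by_cases hli : LinearIndependent ℝ ![v - ε • e₁, v]
    · right; left; exact hli
    · right; right
      rw [linearIndependent_fin2] at hli ⊢
      simp only [Matrix.cons_val_one, Matrix.head_cons, Matrix.cons_val_zero] at hli ⊢
      refine ⟨hv, fun a h => ?_⟩
      push_neg at hli
      obtain ⟨c, hc⟩ := hli hv
      have h1 : e₁ = (ε⁻¹ * (1 - c)) • v := by
        rw [mul_smul, sub_smul, one_smul, hc]
        rw [show v - (v - ε • e₁) = ε • e₁ by abel, inv_smul_smul₀ hε]
      have h2 : e₂ = (ε⁻¹ * (1 - a)) • v := by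
        rw [mul_smul, sub_smul, one_smul, h]
        rw [show v - (v - ε • e₂) = ε • e₂ by abel, inv_smul_smul₀ hε]
      have ha : (1 : ℝ) - a ≠ 0 := fun h0 => he.1 (by rw [h2, h0, mul_zero, zero_smul])
      apply he.2 ((1 - c) / (1 - a))
      rw [h1, h2, smul_smul]
      congr 1
      field_simp

/-- In a normed plane, if the Fermat–Torricelli set of three points has nonempty interior
(a non-degenerate polygon), then for each of the norming functionals φᵢ, the set
{a : φᵢ(a) = ‖a‖} contains two linearly independent vectors, i.e. each cone
C(xᵢ, φᵢ) is a non-degenerate angle rather than a ray. -/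
theorem cones_nondegenerate_of_ft_polygon
    {X : Type*} [NormedAddCommGroup X] [NormedSpace ℝ X]
    (hdim : Module.finrank ℝ X = 2)
    (x₁ x₂ x₃ p : X) (hp : p ∈ ftSet ![x₁, x₂, x₃])
    (h₁ : p ≠ x₁) (h₂ : p ≠ x₂) (h₃ : p ≠ x₃)
    (φ₁ φ₂ φ₃ : X →L[ℝ] ℝ)
    (hφ₁ : ‖φ₁‖ = 1 ∧ φ₁ (x₁ - p) = ‖x₁ - p‖)
    (hφ₂ : ‖φ₂‖ = 1 ∧ φ₂ (x₂ - p) = ‖x₂ - p‖)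
    (hφ₃ : ‖φ₃‖ = 1 ∧ φ₃ (x₃ - p) = ‖x₃ - p‖)
    (hsum : φ₁ + φ₂ + φ₃ = 0)
    (hint : (interior (ftSet ![x₁, x₂, x₃])).Nonempty) :
    (∃ a b : X, φ₁ a = ‖a‖ ∧ φ₁ b = ‖b‖ ∧ LinearIndependent ℝ ![a, b]) ∧
    (∃ a b : X, φ₂ a = ‖a‖ ∧ φ₂ b = ‖b‖ ∧ LinearIndependent ℝ ![a, b]) ∧
    (∃ a b : X, φ₃ a = ‖a‖ ∧ φ₃ b = ‖b‖ ∧ LinearIndependent ℝ ![a, b]) := by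
  have hfd : FiniteDimensional ℝ X := FiniteDimensional.of_finrank_pos (by rw [hdim]; norm_num)
  obtain ⟨c, hc⟩ := hint
  obtain ⟨r, hr, hball⟩ := Metric.mem_nhds_iff.mp (mem_interior_iff_mem_nhds.mp hc)
  let bb := Module.finBasisOfFinrankEq ℝ X hdim
  have he : LinearIndependent ℝ ![bb 0, bb 1] := by
    have heq : ![bb 0, bb 1] = (bb : Fin 2 → X) := by
      funext i
      fin_cases i <;> rfl
    rw [heq]
    exact bb.linearIndependent
  -- every point of the ball is a minimizer, and the norming functionals are norming there too
  have hkey : ∀ q ∈ Metric.ball c r,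
      φ₁ (x₁ - q) = ‖x₁ - q‖ ∧ φ₂ (x₂ - q) = ‖x₂ - q‖ ∧ φ₃ (x₃ - q) = ‖x₃ - q‖ := by
    intro q hq
    have hq' : q ∈ ftSet ![x₁, x₂, x₃] := hball hq
    simp only [ftSet, Set.mem_setOf_eq] at hq'
    have hle := hq' p
    simp only [Fin.sum_univ_three, Matrix.cons_val_zero, Matrix.cons_val_one, Matrix.head_cons,
      Matrix.cons_val_two, Matrix.tail_cons] at hle
    rw [norm_sub_rev q x₁, norm_sub_rev q x₂, norm_sub_rev q x₃,
      norm_sub_rev p x₁, norm_sub_rev p x₂, norm_sub_rev p x₃] at hle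
    have b1 := phi_le_norm φ₁ hφ₁.1 (x₁ - q)
    have b2 := phi_le_norm φ₂ hφ₂.1 (x₂ - q)
    have b3 := phi_le_norm φ₃ hφ₃.1 (x₃ - q)
    have h0 : φ₁ (p - q) + φ₂ (p - q) + φ₃ (p - q) = 0 := by
      have := congrArg (fun f : X →L[ℝ] ℝ => f (p - q)) hsum
      simpa using this
    have e1 : φ₁ (x₁ - q) = ‖x₁ - p‖ + φ₁ (p - q) := by
      rw [← hφ₁.2, ← map_add, sub_add_sub_cancel]
    have e2 : φ₂ (x₂ - q) = ‖x₂ - p‖ + φ₂ (p - q) := by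
      rw [← hφ₂.2, ← map_add, sub_add_sub_cancel]
    have e3 : φ₃ (x₃ - q) = ‖x₃ - p‖ + φ₃ (p - q) := by
      rw [← hφ₃.2, ← map_add, sub_add_sub_cancel]
    refine ⟨le_antisymm b1 ?_, le_antisymm b2 ?_, le_antisymm b3 ?_⟩ <;> linarith
  have main : ∀ (φ : X →L[ℝ] ℝ) (xi : X), (∀ q ∈ Metric.ball c r, φ (xi - q) = ‖xi - q‖) →
      ∃ a b : X, φ a = ‖a‖ ∧ φ b = ‖b‖ ∧ LinearIndependent ℝ ![a, b] := by
    intro φ xi hS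
    set ε := r / (2 * (‖bb 0‖ + ‖bb 1‖ + 1)) with hεdef
    have hεpos : 0 < ε := div_pos hr (by positivity)
    have hmem : ∀ u : X, ‖u‖ < r → φ (xi - c - u) = ‖xi - c - u‖ := by
      intro u hu
      have hqb : c + u ∈ Metric.ball c r := by
        rw [Metric.mem_ball, dist_eq_norm]
        simpa using hu
      have h := hS (c + u) hqb
      rw [show xi - (c + u) = xi - c - u by abel] at h
      exact h
    have hhalf : ε * (‖bb 0‖ + ‖bb 1‖ + 1) = r / 2 := by
      rw [hεdef]
      field_simp
    have h1 : ‖ε • bb 0‖ < r := by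
      rw [norm_smul, Real.norm_eq_abs, abs_of_pos hεpos]
      nlinarith [norm_nonneg (bb 1), hεpos.le]
    have h2 : ‖ε • bb 1‖ < r := by
      rw [norm_smul, Real.norm_eq_abs, abs_of_pos hεpos]
      nlinarith [norm_nonneg (bb 0), hεpos.le]
    have m0 : φ (xi - c) = ‖xi - c‖ := by
      have := hmem 0 (by simpa using hr)
      simpa using this
    have m1 : φ (xi - c - ε • bb 0) = ‖xi - c - ε • bb 0‖ := hmem _ h1
    have m2 : φ (xi - c - ε • bb 1) = ‖xi - c - ε • bb 1‖ := hmem _ h2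
    rcases exists_pair_li (bb 0) (bb 1) he (xi - c) ε hεpos.ne' with h | h | h
    · exact ⟨_, _, m1, m2, h⟩
    · exact ⟨_, _, m1, m0, h⟩
    · exact ⟨_, _, m2, m0, h⟩
  exact ⟨main φ₁ x₁ (fun q hq => (hkey q hq).1), main φ₂ x₂ (fun q hq => (hkey q hq).2.1),
    main φ₃ x₃ (fun q hq => (hkey q hq).2.2)⟩
end

section
/- Let x₁, x₂, x₃ be points in a normed plane X, let p ∈ ft(x₁, x₂, x₃) with p ≠ xᵢ for all i, and let φ₁, φ₂, φ₃ be norming functionals for x₁ − p, x₂ − p, x₃ − p respectively with φ₁ + φ₂ + φ₃ = 0. If ft(x₁, x₂, x₃) is a non-degenerate segment (i.e., equals the closed segment [a, b] for some a ≠ b), then for at least one i the set {a ∈ X : φᵢ(a) = ‖a‖} contains two linearly independent vectors (i.e., at least one cone C(xᵢ, φᵢ) is a non-degenerate angle rather than a ray). -/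
private lemma sign_of_dep {X : Type*} [NormedAddCommGroup X] [NormedSpace ℝ X]
    (φ : X →L[ℝ] ℝ) (u v d : X) (hu : u ≠ 0) (hd : d ≠ 0) (hdv : d = u - v)
    (hli : ¬ LinearIndependent ℝ ![u, v]) (hφu : φ u = ‖u‖) :
    ∃ ε : ℝ, (ε = 1 ∨ ε = -1) ∧ φ d = ε * ‖d‖ := by
  rw [LinearIndependent.pair_iff] at hli
  push_neg at hli
  obtain ⟨s, t, hst, hne⟩ := hli
  have ht : t ≠ 0 := by
    intro h
    subst h
    simp only [zero_smul, add_zero, smul_eq_zero] at hst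
    rcases hst with h | h
    · exact hne h rfl
    · exact hu h
  have hv : v = (-(s/t)) • u := by
    have h1 : t • v = -(s • u) := eq_neg_of_add_eq_zero_right hst
    calc v = t⁻¹ • (t • v) := by rw [smul_smul, inv_mul_cancel₀ ht, one_smul]
    _ = t⁻¹ • (-(s • u)) := by rw [h1]
    _ = (-(s/t)) • u := by rw [smul_neg, smul_smul, inv_mul_eq_div, ← neg_smul]
  set c : ℝ := 1 + s / t with hc
  have hdu : d = c • u := by
    rw [hdv, hv, hc, show (1 + s/t) = 1 - (-(s/t)) by ring, sub_smul, one_smul]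
  have hcne : c ≠ 0 := by
    intro h
    rw [h, zero_smul] at hdu
    exact hd hdu
  have hu' : u = c⁻¹ • d := by
    rw [hdu, smul_smul, inv_mul_cancel₀ hcne, one_smul]
  have key : c⁻¹ * φ d = |c⁻¹| * ‖d‖ := by
    have h1 : φ u = c⁻¹ * φ d := by rw [hu', map_smul]; simp
    have h2 : ‖u‖ = |c⁻¹| * ‖d‖ := by rw [hu', norm_smul, Real.norm_eq_abs]
    rw [← h1, ← h2]; exact hφu
  refine ⟨c / |c|, ?_, ?_⟩
  · rcases lt_or_gt_of_ne hcne with h | h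
    · right; rw [abs_of_neg h]; field_simp
    · left; rw [abs_of_pos h]; field_simp
  · have key2 : φ d = c * |c⁻¹| * ‖d‖ := by
      have := congrArg (fun z => c * z) key
      simp only [← mul_assoc, mul_inv_cancel₀ hcne, one_mul] at this
      exact this
    rw [key2, abs_inv]
    ring

/-- In a normed plane, if the Fermat–Torricelli set of three points is a non-degenerate
segment, then for at least one of the norming functionals φᵢ the set {a : φᵢ(a) = ‖a‖}
contains two linearly independent vectors, i.e. at least one cone C(xᵢ, φᵢ) is a
non-degenerate angle rather than a ray. -/
theorem cone_nondegenerate_of_ft_segment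
    {X : Type*} [NormedAddCommGroup X] [NormedSpace ℝ X]
    (hdim : Module.finrank ℝ X = 2)
    (x₁ x₂ x₃ p : X) (hp : p ∈ ftSet ![x₁, x₂, x₃])
    (h₁ : p ≠ x₁) (h₂ : p ≠ x₂) (h₃ : p ≠ x₃)
    (φ₁ φ₂ φ₃ : X →L[ℝ] ℝ)
    (hφ₁ : ‖φ₁‖ = 1 ∧ φ₁ (x₁ - p) = ‖x₁ - p‖)
    (hφ₂ : ‖φ₂‖ = 1 ∧ φ₂ (x₂ - p) = ‖x₂ - p‖)
    (hφ₃ : ‖φ₃‖ = 1 ∧ φ₃ (x₃ - p) = ‖x₃ - p‖)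
    (hsum : φ₁ + φ₂ + φ₃ = 0)
    (hseg : ∃ a b : X, a ≠ b ∧ ftSet ![x₁, x₂, x₃] = segment ℝ a b) :
    (∃ a b : X, φ₁ a = ‖a‖ ∧ φ₁ b = ‖b‖ ∧ LinearIndependent ℝ ![a, b]) ∨
    (∃ a b : X, φ₂ a = ‖a‖ ∧ φ₂ b = ‖b‖ ∧ LinearIndependent ℝ ![a, b]) ∨
    (∃ a b : X, φ₃ a = ‖a‖ ∧ φ₃ b = ‖b‖ ∧ LinearIndependent ℝ ![a, b]) := by
  obtain ⟨a, b, hab, hft⟩ := hseg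
  -- pick q in the FT set with q ≠ p
  obtain ⟨q, hq, hqp⟩ : ∃ q : X, q ∈ ftSet ![x₁, x₂, x₃] ∧ q ≠ p := by
    by_cases h : a = p
    · exact ⟨b, by rw [hft]; exact right_mem_segment ℝ a b, fun hb => hab (by rw [h, hb])⟩
    · exact ⟨a, by rw [hft]; exact left_mem_segment ℝ a b, h⟩
  -- equal sums
  have hpq : ‖p - x₁‖ + ‖p - x₂‖ + ‖p - x₃‖ = ‖q - x₁‖ + ‖q - x₂‖ + ‖q - x₃‖ := by
    have h1 := hp q
    have h2 := hq p
    simp only [ftSet, Set.mem_setOf_eq, Fin.sum_univ_three, Matrix.cons_val_zero,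
      Matrix.cons_val_one, Matrix.head_cons, Matrix.cons_val_two, Matrix.tail_cons] at h1 h2
    linarith
  -- φᵢ also norms xᵢ - q
  have hle : ∀ (φ : X →L[ℝ] ℝ) (z : X), ‖φ‖ = 1 → φ z ≤ ‖z‖ := by
    intro φ z hφ
    calc φ z ≤ |φ z| := le_abs_self _
    _ ≤ ‖φ‖ * ‖z‖ := φ.le_opNorm z
    _ = ‖z‖ := by rw [hφ, one_mul]
  have hsumq : φ₁ (x₁ - q) + φ₂ (x₂ - q) + φ₃ (x₃ - q)
      = ‖x₁ - q‖ + ‖x₂ - q‖ + ‖x₃ - q‖ := by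
    have hz : φ₁ q + φ₂ q + φ₃ q = 0 := by
      have := congrArg (fun ψ : X →L[ℝ] ℝ => ψ q) hsum
      simpa using this
    have hz' : φ₁ p + φ₂ p + φ₃ p = 0 := by
      have := congrArg (fun ψ : X →L[ℝ] ℝ => ψ p) hsum
      simpa using this
    have e1 : φ₁ (x₁ - q) + φ₂ (x₂ - q) + φ₃ (x₃ - q)
        = φ₁ (x₁ - p) + φ₂ (x₂ - p) + φ₃ (x₃ - p) := by
      simp only [map_sub]; linarith
    rw [e1, hφ₁.2, hφ₂.2, hφ₃.2]
    have n1 : ‖x₁ - p‖ = ‖p - x₁‖ := norm_sub_rev _ _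
    have n2 : ‖x₂ - p‖ = ‖p - x₂‖ := norm_sub_rev _ _
    have n3 : ‖x₃ - p‖ = ‖p - x₃‖ := norm_sub_rev _ _
    have m1 : ‖x₁ - q‖ = ‖q - x₁‖ := norm_sub_rev _ _
    have m2 : ‖x₂ - q‖ = ‖q - x₂‖ := norm_sub_rev _ _
    have m3 : ‖x₃ - q‖ = ‖q - x₃‖ := norm_sub_rev _ _
    linarith
  have hq1 : φ₁ (x₁ - q) = ‖x₁ - q‖ := by
    have := hle φ₁ (x₁ - q) hφ₁.1
    have := hle φ₂ (x₂ - q) hφ₂.1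
    have := hle φ₃ (x₃ - q) hφ₃.1
    linarith
  have hq2 : φ₂ (x₂ - q) = ‖x₂ - q‖ := by
    have := hle φ₁ (x₁ - q) hφ₁.1
    have := hle φ₂ (x₂ - q) hφ₂.1
    have := hle φ₃ (x₃ - q) hφ₃.1
    linarith
  have hq3 : φ₃ (x₃ - q) = ‖x₃ - q‖ := by
    have := hle φ₁ (x₁ - q) hφ₁.1
    have := hle φ₂ (x₂ - q) hφ₂.1
    have := hle φ₃ (x₃ - q) hφ₃.1
    linarith
  by_contra hcon
  push_neg at hcon
  obtain ⟨hc1, hc2, hc3⟩ := hcon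
  set d : X := (x₁ - p) - (x₁ - q) with hd_def
  have hd_eq : d = q - p := by rw [hd_def]; abel
  have hdne : d ≠ 0 := by rw [hd_eq]; exact sub_ne_zero.mpr hqp
  have hu1 : x₁ - p ≠ 0 := sub_ne_zero.mpr (Ne.symm h₁)
  have hu2 : x₂ - p ≠ 0 := sub_ne_zero.mpr (Ne.symm h₂)
  have hu3 : x₃ - p ≠ 0 := sub_ne_zero.mpr (Ne.symm h₃)
  obtain ⟨ε₁, hε₁, he1⟩ := sign_of_dep φ₁ (x₁ - p) (x₁ - q) d hu1 hdne rfl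
    (hc1 _ _ hφ₁.2 hq1) hφ₁.2
  obtain ⟨ε₂, hε₂, he2⟩ := sign_of_dep φ₂ (x₂ - p) (x₂ - q) d hu2 hdne
    (by rw [hd_def]; abel) (hc2 _ _ hφ₂.2 hq2) hφ₂.2
  obtain ⟨ε₃, hε₃, he3⟩ := sign_of_dep φ₃ (x₃ - p) (x₃ - q) d hu3 hdne
    (by rw [hd_def]; abel) (hc3 _ _ hφ₃.2 hq3) hφ₃.2
  have hzero : φ₁ d + φ₂ d + φ₃ d = 0 := by
    have := congrArg (fun ψ : X →L[ℝ] ℝ => ψ d) hsum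
    simpa using this
  rw [he1, he2, he3] at hzero
  have hdnorm : ‖d‖ ≠ 0 := norm_ne_zero_iff.mpr hdne
  have hsum3 : ε₁ + ε₂ + ε₃ = 0 := by
    have : (ε₁ + ε₂ + ε₃) * ‖d‖ = 0 := by linarith
    rcases mul_eq_zero.mp this with h | h
    · exact h
    · exact absurd h hdnorm
  rcases hε₁ with h1 | h1 <;> rcases hε₂ with h2 | h2 <;> rcases hε₃ with h3 | h3 <;>
    subst h1 <;> subst h2 <;> subst h3 <;> norm_num at hsum3
end

section
/- Let X be a normed plane satisfying the first non-uniqueness condition: there exist unit vectors x₁, x₂, x₃ in X, each of the first type, and norming functionals φ₁, φ₂, φ₃ for x₁, x₂, x₃ with φ₁ + φ₂ + φ₃ = 0. Then there exist three points y₁, y₂, y₃ in X such that ft(y₁, y₂, y₃) is a non-degenerate polygon, i.e., has nonempty interior. -/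
/-- A unit vector is of the first type if it is an interior point of a flattening of the
unit sphere: it lies in the open segment between two distinct unit vectors whose closed
segment is contained in the unit sphere. -/
def FirstType {X : Type*} [NormedAddCommGroup X] [NormedSpace ℝ X] (x : X) : Prop :=
  ‖x‖ = 1 ∧ ∃ u v : X, u ≠ v ∧ ‖u‖ = 1 ∧ ‖v‖ = 1 ∧ x ∈ openSegment ℝ u v ∧
    ∀ z ∈ segment ℝ u v, ‖z‖ = 1

/-- A unit vector is of the zero type if it is not of the first type. -/
def ZeroType {X : Type*} [NormedAddCommGroup X] [NormedSpace ℝ X] (x : X) : Prop :=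
  ‖x‖ = 1 ∧ ¬ FirstType x

/-- φ is a norming functional for x : ‖φ‖ = 1 and φ(x) = ‖x‖. -/
def IsNorming {X : Type*} [NormedAddCommGroup X] [NormedSpace ℝ X]
    (φ : X →L[ℝ] ℝ) (x : X) : Prop :=
  ‖φ‖ = 1 ∧ φ x = ‖x‖

/-- Near a first-type point, the norming functional computes the norm: there is a
neighborhood of `x` (here, `x + p` for small `p`) on which `φ` equals the norm. -/
lemma norming_nhd {X : Type*} [NormedAddCommGroup X] [NormedSpace ℝ X]
    (hdim : Module.finrank ℝ X = 2)
    (x : X) (hx : FirstType x) (φ : X →L[ℝ] ℝ) (hφ : IsNorming φ x) :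
    ∃ δ > 0, ∀ p : X, ‖p‖ ≤ δ → φ (p + x) = ‖p + x‖ := by
  have : FiniteDimensional ℝ X := FiniteDimensional.of_finrank_eq_succ hdim
  obtain ⟨hx1, u, v, huv, hu, hv, hxo, hseg⟩ := hx
  obtain ⟨a, b, ha, hb, hab, hx_eq⟩ := hxo
  have hφx : φ x = 1 := by rw [hφ.2, hx1]
  -- bound |φ z| ≤ ‖z‖
  have hbnd : ∀ z : X, |φ z| ≤ ‖z‖ := fun z => by
    simpa [hφ.1] using φ.le_opNorm z
  -- φ u = 1 and φ v = 1
  have hφu1 : φ u ≤ 1 := le_trans (le_abs_self _) (by simpa [hu] using hbnd u)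
  have hφv1 : φ v ≤ 1 := le_trans (le_abs_self _) (by simpa [hv] using hbnd v)
  have hsum1 : a * φ u + b * φ v = 1 := by
    have := congrArg φ hx_eq
    simpa [map_add, map_smul, smul_eq_mul, hφx] using this
  have hφu : φ u = 1 := by nlinarith
  have hφv : φ v = 1 := by nlinarith
  -- kernel of φ is spanned by v - u
  have hvu : v - u ≠ 0 := sub_ne_zero.mpr (Ne.symm huv)
  have hφvu : φ (v - u) = 0 := by simp [map_sub, hφu, hφv]
  have hφne : (φ : X →ₗ[ℝ] ℝ) ≠ 0 := by
    intro h
    have : φ x = 0 := by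
      have := congrArg (fun f : X →ₗ[ℝ] ℝ => f x) h
      simpa using this
    rw [hφx] at this; norm_num at this
  have hker1 : Module.finrank ℝ (LinearMap.ker (φ : X →ₗ[ℝ] ℝ)) = 1 := by
    have := Module.Dual.finrank_ker_add_one_of_ne_zero (f := (φ : X →ₗ[ℝ] ℝ)) hφne
    omega
  have hspan : (Submodule.span ℝ {v - u}) = LinearMap.ker (φ : X →ₗ[ℝ] ℝ) := by
    apply Submodule.eq_of_le_of_finrank_le
    · rw [Submodule.span_le, Set.singleton_subset_iff]
      exact LinearMap.mem_ker.mpr hφvu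
    · rw [hker1, finrank_span_singleton hvu]
  have hmem : ∀ w : X, φ w = 0 → ∃ s : ℝ, s • (v - u) = w := by
    intro w hw
    have : w ∈ Submodule.span ℝ {v - u} := by
      rw [hspan]; exact LinearMap.mem_ker.mpr hw
    exact Submodule.mem_span_singleton.mp this
  -- choose δ
  have hvu_pos : 0 < ‖v - u‖ := norm_pos_iff.mpr hvu
  have hmab : 0 < min a b := lt_min ha hb
  refine ⟨min (1/2) (min a b * ‖v - u‖ / 8), by positivity, ?_⟩
  intro p hp
  have hp2 : ‖p‖ ≤ 1/2 := le_trans hp (min_le_left _ _)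
  have hp8 : ‖p‖ ≤ min a b * ‖v - u‖ / 8 := le_trans hp (min_le_right _ _)
  have hφp : |φ p| ≤ ‖p‖ := hbnd p
  set c : ℝ := 1 + φ p with hc
  have hcpos : (0:ℝ) < c := by
    have := abs_le.mp hφp
    nlinarith [this.1]
  have hcge : (1:ℝ)/2 ≤ c := by
    have := abs_le.mp hφp
    nlinarith [this.1]
  set w : X := c⁻¹ • (p - φ p • x) with hw
  have hφw : φ w = 0 := by
    rw [hw]
    simp [map_smul, map_sub, hφx, smul_eq_mul]
  obtain ⟨s, hs⟩ := hmem w hφw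
  -- bound on s
  have hwnorm : ‖w‖ ≤ 4 * ‖p‖ := by
    have h1 : ‖p - φ p • x‖ ≤ ‖p‖ + |φ p| * ‖x‖ := by
      calc ‖p - φ p • x‖ ≤ ‖p‖ + ‖φ p • x‖ := norm_sub_le _ _
        _ = ‖p‖ + |φ p| * ‖x‖ := by rw [norm_smul, Real.norm_eq_abs]
    have h2 : ‖p - φ p • x‖ ≤ 2 * ‖p‖ := by rw [hx1] at h1; nlinarith
    have hcinv : c⁻¹ ≤ 2 := by
      rw [inv_le_comm₀ hcpos (by norm_num)]
      linarith
    calc ‖w‖ = c⁻¹ * ‖p - φ p • x‖ := by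
          rw [hw, norm_smul, Real.norm_eq_abs, abs_of_pos (inv_pos.mpr hcpos)]
      _ ≤ 2 * (2 * ‖p‖) := by
          apply mul_le_mul hcinv h2 (norm_nonneg _) (by norm_num)
      _ = 4 * ‖p‖ := by ring
  have hsbound : |s| ≤ min a b / 2 := by
    have : |s| * ‖v - u‖ = ‖w‖ := by
      rw [← hs, norm_smul, Real.norm_eq_abs]
    have h4 : |s| * ‖v - u‖ ≤ 4 * (min a b * ‖v - u‖ / 8) := by
      rw [this]; linarith [hwnorm]
    have h5 : |s| * ‖v - u‖ ≤ (min a b / 2) * ‖v - u‖ := by linarith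
    exact le_of_mul_le_mul_right h5 hvu_pos
  have hsa : |s| < a := lt_of_le_of_lt hsbound (by
    have := min_le_left a b; linarith)
  have hsb : |s| < b := lt_of_le_of_lt hsbound (by
    have := min_le_right a b; linarith)
  -- x + w ∈ segment [u, v]
  have hxw : x + w ∈ segment ℝ u v := by
    refine ⟨a - s, b + s, ?_, ?_, by linarith, ?_⟩
    · have := abs_le.mp hsa.le; linarith [this.2]
    · have := abs_le.mp hsb.le; linarith [this.1]
    · rw [← hs, ← hx_eq]
      module
  have hxwnorm : ‖x + w‖ = 1 := hseg _ hxw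
  -- p + x = c • (x + w)
  have hkey : p + x = c • (x + w) := by
    rw [hw, smul_add, smul_inv_smul₀ (ne_of_gt hcpos), hc]
    module
  calc φ (p + x) = φ p + φ x := by rw [map_add]
    _ = c := by rw [hφx, hc]; ring
    _ = ‖p + x‖ := by
        rw [hkey, norm_smul, Real.norm_eq_abs, abs_of_pos hcpos, hxwnorm, mul_one]

/-- First non-uniqueness condition: if there is a consistent triple of three first-type
elements of the unit circle (norming functionals summing to zero), then there are three
points whose Fermat–Torricelli set is a non-degenerate polygon. -/
theorem ft_polygon_of_first_condition
    {X : Type*} [NormedAddCommGroup X] [NormedSpace ℝ X]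
    (hdim : Module.finrank ℝ X = 2)
    (x₁ x₂ x₃ : X) (hx₁ : FirstType x₁) (hx₂ : FirstType x₂) (hx₃ : FirstType x₃)
    (φ₁ φ₂ φ₃ : X →L[ℝ] ℝ)
    (hφ₁ : IsNorming φ₁ x₁) (hφ₂ : IsNorming φ₂ x₂) (hφ₃ : IsNorming φ₃ x₃)
    (hsum : φ₁ + φ₂ + φ₃ = 0) :
    ∃ y₁ y₂ y₃ : X, (interior (ftSet ![y₁, y₂, y₃])).Nonempty := by
  obtain ⟨δ₁, hδ₁, h₁⟩ := norming_nhd hdim x₁ hx₁ φ₁ hφ₁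
  obtain ⟨δ₂, hδ₂, h₂⟩ := norming_nhd hdim x₂ hx₂ φ₂ hφ₂
  obtain ⟨δ₃, hδ₃, h₃⟩ := norming_nhd hdim x₃ hx₃ φ₃ hφ₃
  set δ : ℝ := min δ₁ (min δ₂ δ₃) with hδdef
  have hδ : 0 < δ := lt_min hδ₁ (lt_min hδ₂ hδ₃)
  refine ⟨-x₁, -x₂, -x₃, 0, ?_⟩
  have hbnd : ∀ (φ : X →L[ℝ] ℝ), ‖φ‖ = 1 → ∀ z : X, φ z ≤ ‖z‖ := fun φ hn z =>
    le_trans (le_abs_self _) (by simpa [hn] using φ.le_opNorm z)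
  have hsub : Metric.ball (0:X) δ ⊆ ftSet ![-x₁, -x₂, -x₃] := by
    intro p hpball q
    have hp : ‖p‖ ≤ δ := le_of_lt (by simpa using Metric.mem_ball.mp hpball)
    have e₁ : ‖p - -x₁‖ = φ₁ (p + x₁) := by
      rw [sub_neg_eq_add]
      exact (h₁ p (le_trans hp (min_le_left _ _))).symm
    have e₂ : ‖p - -x₂‖ = φ₂ (p + x₂) := by
      rw [sub_neg_eq_add]
      exact (h₂ p (le_trans hp (le_trans (min_le_right _ _) (min_le_left _ _)))).symm
    have e₃ : ‖p - -x₃‖ = φ₃ (p + x₃) := by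
      rw [sub_neg_eq_add]
      exact (h₃ p (le_trans hp (le_trans (min_le_right _ _) (min_le_right _ _)))).symm
    have hzero : ∀ z : X, φ₁ z + φ₂ z + φ₃ z = 0 := by
      intro z
      have := congrArg (fun f : X →L[ℝ] ℝ => f z) hsum
      simpa using this
    have lhs_eq : φ₁ (p + x₁) + φ₂ (p + x₂) + φ₃ (p + x₃)
        = φ₁ x₁ + φ₂ x₂ + φ₃ x₃ := by
      simp only [map_add]
      have := hzero p
      linarith
    have rhs_ge : φ₁ x₁ + φ₂ x₂ + φ₃ x₃ ≤ ‖q - -x₁‖ + ‖q - -x₂‖ + ‖q - -x₃‖ := by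
      have b₁ := hbnd φ₁ hφ₁.1 (q + x₁)
      have b₂ := hbnd φ₂ hφ₂.1 (q + x₂)
      have b₃ := hbnd φ₃ hφ₃.1 (q + x₃)
      have := hzero q
      simp only [map_add] at b₁ b₂ b₃
      simp only [sub_neg_eq_add]
      linarith
    rw [Fin.sum_univ_three, Fin.sum_univ_three]
    simp only [Matrix.cons_val_zero, Matrix.cons_val_one, Matrix.head_cons,
      Matrix.cons_val_two, Matrix.tail_cons]
    rw [e₁, e₂, e₃]
    linarith [lhs_eq, rhs_ge]
  exact mem_interior.mpr ⟨Metric.ball 0 δ, hsub, Metric.isOpen_ball, Metric.mem_ball_self hδ⟩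
end

section
/- Let X be a normed plane satisfying the third non-uniqueness condition: there exist a unit vector x₃ of the first type and unit vectors x₁, x₂ of the zero type with x₂ = −x₁, together with norming functionals φ₁, φ₂, φ₃ for x₁, x₂, x₃ such that φ₁ + φ₂ + φ₃ = 0 and, for i = 1, 2, xᵢ is the only unit vector y with φᵢ(y) = 1. Then there exist three points y₁, y₂, y₃ in X such that ft(y₁, y₂, y₃) is a non-degenerate segment, i.e., equals the closed segment [a, b] for some a ≠ b. -/
/-- Third non-uniqueness condition: if there is a consistent triple consisting of one
first-type element and two antipodal zero-type elements of the unit circle (the support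
lines at the zero-type elements touching the circle only there), then there are three
points whose Fermat–Torricelli set is a non-degenerate segment. -/
theorem ft_segment_of_third_condition
    {X : Type*} [NormedAddCommGroup X] [NormedSpace ℝ X]
    (hdim : Module.finrank ℝ X = 2)
    (x₁ x₂ x₃ : X) (hx₁ : ZeroType x₁) (hx₂ : ZeroType x₂) (hx₃ : FirstType x₃)
    (hanti : x₂ = -x₁)
    (φ₁ φ₂ φ₃ : X →L[ℝ] ℝ)
    (hφ₁ : IsNorming φ₁ x₁) (hφ₂ : IsNorming φ₂ x₂) (hφ₃ : IsNorming φ₃ x₃)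
    (hsum : φ₁ + φ₂ + φ₃ = 0)
    (huniq₁ : ∀ y : X, ‖y‖ = 1 → φ₁ y = 1 → y = x₁)
    (huniq₂ : ∀ y : X, ‖y‖ = 1 → φ₂ y = 1 → y = x₂) :
    ∃ y₁ y₂ y₃ a b : X, a ≠ b ∧ ftSet ![y₁, y₂, y₃] = segment ℝ a b := by
  obtain ⟨hφ₁n, hφ₁x⟩ := hφ₁
  obtain ⟨hφ₂n, hφ₂x⟩ := hφ₂
  obtain ⟨hφ₃n, hφ₃x⟩ := hφ₃
  have hn₁ : ‖x₁‖ = 1 := hx₁.1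
  have hn₂ : ‖x₂‖ = 1 := hx₂.1
  have hn₃ : ‖x₃‖ = 1 := hx₃.1
  rw [hn₁] at hφ₁x; rw [hn₂] at hφ₂x; rw [hn₃] at hφ₃x
  have hx₁0 : x₁ ≠ 0 := by intro h; rw [h, norm_zero] at hn₁; norm_num at hn₁
  have hbd : ∀ (ψ : X →L[ℝ] ℝ), ‖ψ‖ = 1 → ∀ y : X, ψ y ≤ ‖y‖ := by
    intro ψ hψ y
    calc ψ y ≤ |ψ y| := le_abs_self _
    _ = ‖ψ y‖ := rfl
    _ ≤ ‖ψ‖ * ‖y‖ := ψ.le_opNorm y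
    _ = ‖y‖ := by rw [hψ, one_mul]
  have hφ₂x₁ : φ₂ x₁ = -1 := by
    have h := hφ₂x; rw [hanti, map_neg] at h; linarith
  have happ : ∀ q : X, φ₁ q + φ₂ q + φ₃ q = 0 := by
    intro q
    have h := congrArg (fun ψ : X →L[ℝ] ℝ => ψ q) hsum
    simpa using h
  have hφ₃x₁ : φ₃ x₁ = 0 := by
    have := happ x₁; rw [hφ₁x, hφ₂x₁] at this; linarith
  -- the objective function
  have hsum3 : ∀ q : X, ∑ i, ‖q - (![x₁, x₂, x₃]) i‖ = ‖q - x₁‖ + ‖q - x₂‖ + ‖q - x₃‖ := by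
    intro q; simp [Fin.sum_univ_three]
  have hlow : ∀ q : X, (3:ℝ) ≤ ∑ i, ‖q - (![x₁, x₂, x₃]) i‖ := by
    intro q
    have h1 : φ₁ (x₁ - q) ≤ ‖x₁ - q‖ := hbd φ₁ hφ₁n _
    have h2 : φ₂ (x₂ - q) ≤ ‖x₂ - q‖ := hbd φ₂ hφ₂n _
    have h3 : φ₃ (x₃ - q) ≤ ‖x₃ - q‖ := hbd φ₃ hφ₃n _
    rw [map_sub, hφ₁x] at h1; rw [map_sub, hφ₂x] at h2; rw [map_sub, hφ₃x] at h3
    have e1 : ‖q - x₁‖ = ‖x₁ - q‖ := norm_sub_rev _ _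
    have e2 : ‖q - x₂‖ = ‖x₂ - q‖ := norm_sub_rev _ _
    have e3 : ‖q - x₃‖ = ‖x₃ - q‖ := norm_sub_rev _ _
    have h := happ q
    rw [hsum3, e1, e2, e3]
    linarith
  -- the candidate set
  set I : Set ℝ := {t | t ∈ Set.Icc (-1:ℝ) 1 ∧ ‖x₃ - t • x₁‖ ≤ 1} with hI
  have hnorm3 : ∀ t : ℝ, ‖x₃ - t • x₁‖ ≤ 1 → ‖x₃ - t • x₁‖ = 1 := by
    intro t ht
    have h3 : φ₃ (x₃ - t • x₁) ≤ ‖x₃ - t • x₁‖ := hbd φ₃ hφ₃n _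
    rw [map_sub, map_smul, hφ₃x, hφ₃x₁, smul_eq_mul, mul_zero, sub_zero] at h3
    linarith
  have hval : ∀ t ∈ I, ∑ i, ‖t • x₁ - (![x₁, x₂, x₃]) i‖ = 3 := by
    intro t ht
    obtain ⟨⟨ht1, ht2⟩, ht3⟩ := ht
    rw [hsum3]
    have e1 : ‖t • x₁ - x₁‖ = 1 - t := by
      have : t • x₁ - x₁ = (t - 1) • x₁ := by rw [sub_smul, one_smul]
      rw [this, norm_smul, hn₁, mul_one, Real.norm_eq_abs, abs_of_nonpos (by linarith)]
      ring
    have e2 : ‖t • x₁ - x₂‖ = 1 + t := by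
      have : t • x₁ - x₂ = (t + 1) • x₁ := by rw [hanti, sub_neg_eq_add, add_smul, one_smul]
      rw [this, norm_smul, hn₁, mul_one, Real.norm_eq_abs, abs_of_nonneg (by linarith)]
      ring
    have e3 : ‖t • x₁ - x₃‖ = 1 := by rw [norm_sub_rev]; exact hnorm3 t ht3
    rw [e1, e2, e3]; ring
  have hmem : ∀ t ∈ I, (t • x₁) ∈ ftSet ![x₁, x₂, x₃] := by
    intro t ht q
    rw [hval t ht]
    exact hlow q
  -- the converse
  have hray : ∀ (ψ : X →L[ℝ] ℝ) (x : X), ‖x‖ = 1 → (∀ y, ‖y‖ = 1 → ψ y = 1 → y = x) →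
      ∀ w : X, ψ w = ‖w‖ → w = ‖w‖ • x := by
    intro ψ x hx hu w hw
    rcases eq_or_ne w 0 with h | h
    · simp [h]
    · have hnw : (0:ℝ) < ‖w‖ := norm_pos_iff.mpr h
      have h1 : ‖(‖w‖⁻¹ • w)‖ = 1 := by
        rw [norm_smul, Real.norm_eq_abs, abs_of_pos (inv_pos.mpr hnw)]
        field_simp
      have h2 : ψ (‖w‖⁻¹ • w) = 1 := by
        rw [map_smul, smul_eq_mul, hw]
        field_simp
      have h3 := hu _ h1 h2
      have : ‖w‖ • (‖w‖⁻¹ • w) = w := by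
        rw [smul_smul, mul_inv_cancel₀ (ne_of_gt hnw), one_smul]
      calc w = ‖w‖ • (‖w‖⁻¹ • w) := this.symm
      _ = ‖w‖ • x := by rw [h3]
  have hconv2 : ∀ q ∈ ftSet ![x₁, x₂, x₃], ∃ t ∈ I, q = t • x₁ := by
    intro q hq
    have hle : ∑ i, ‖q - (![x₁, x₂, x₃]) i‖ ≤ 3 := by
      have := hq ((0:ℝ) • x₁)
      rw [hval 0 ⟨⟨by norm_num, by norm_num⟩, by simp [hn₃]⟩] at this
      exact this
    have h1 : φ₁ (x₁ - q) ≤ ‖x₁ - q‖ := hbd φ₁ hφ₁n _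
    have h2 : φ₂ (x₂ - q) ≤ ‖x₂ - q‖ := hbd φ₂ hφ₂n _
    have h3 : φ₃ (x₃ - q) ≤ ‖x₃ - q‖ := hbd φ₃ hφ₃n _
    have hsumφ : φ₁ (x₁ - q) + φ₂ (x₂ - q) + φ₃ (x₃ - q) = 3 := by
      have h := happ q
      rw [map_sub, map_sub, map_sub, hφ₁x, hφ₂x, hφ₃x]
      linarith
    rw [hsum3, norm_sub_rev q x₁, norm_sub_rev q x₂, norm_sub_rev q x₃] at hle
    have he1 : φ₁ (x₁ - q) = ‖x₁ - q‖ := by linarith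
    have he2 : φ₂ (x₂ - q) = ‖x₂ - q‖ := by linarith
    have he3 : φ₃ (x₃ - q) = ‖x₃ - q‖ := by linarith
    have hw1 : x₁ - q = ‖x₁ - q‖ • x₁ := hray φ₁ x₁ hn₁ huniq₁ _ he1
    have hw2 : x₂ - q = ‖x₂ - q‖ • x₂ := hray φ₂ x₂ hn₂ huniq₂ _ he2
    set s₁ := ‖x₁ - q‖ with hs₁
    set s₂ := ‖x₂ - q‖ with hs₂
    have hq1 : q = (1 - s₁) • x₁ := by
      rw [sub_smul, one_smul, ← hw1]; abel
    have hq2 : q = (s₂ - 1) • x₁ := by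
      have : q = (1 - s₂) • x₂ := by rw [sub_smul, one_smul, ← hw2]; abel
      rw [this, hanti, smul_neg, ← neg_smul]; ring_nf
    have hteq : 1 - s₁ = s₂ - 1 := by
      have h := hq1.symm.trans hq2
      have := sub_eq_zero.mpr h
      rw [← sub_smul] at this
      have h0 := (smul_eq_zero.mp this).resolve_right hx₁0
      linarith [sub_eq_zero.mp (by linarith [h0] : (1 - s₁) - (s₂ - 1) = 0)]
    refine ⟨1 - s₁, ⟨⟨?_, ?_⟩, ?_⟩, hq1⟩
    · rw [hteq]; have : 0 ≤ s₂ := norm_nonneg _; linarith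
    · have : 0 ≤ s₁ := norm_nonneg _; linarith
    · have : x₃ - (1 - s₁) • x₁ = x₃ - q := by rw [hq1]
      rw [this, ← he3, map_sub, hφ₃x, hq1, map_smul, hφ₃x₁, smul_eq_mul, mul_zero, sub_zero]
  have hft : ftSet ![x₁, x₂, x₃] = (fun t : ℝ => t • x₁) '' I := by
    ext q
    constructor
    · intro hq
      obtain ⟨t, ht, hqt⟩ := hconv2 q hq
      exact ⟨t, ht, hqt.symm⟩
    · rintro ⟨t, ht, rfl⟩
      exact hmem t ht
  -- structure of I : closed, bounded, convex, nonempty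
  have hInE : (0:ℝ) ∈ I := by
    refine ⟨⟨by norm_num, by norm_num⟩, ?_⟩
    simp [hn₃]
  have hIbdd : I ⊆ Set.Icc (-1:ℝ) 1 := fun t ht => ht.1
  have hIbddA : BddAbove I := ⟨1, fun t ht => ht.1.2⟩
  have hIbddB : BddBelow I := ⟨-1, fun t ht => ht.1.1⟩
  have hIclosed : IsClosed I := by
    have hc : Continuous fun t : ℝ => ‖x₃ - t • x₁‖ :=
      (continuous_const.sub (continuous_id.smul continuous_const)).norm
    exact isClosed_Icc.inter (isClosed_le hc continuous_const)
  have hIconv : Convex ℝ I := by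
    intro p hp q hq α β hα hβ hαβ
    constructor
    · exact (convex_Icc (-1:ℝ) 1) hp.1 hq.1 hα hβ hαβ
    · have hcomb : x₃ - (α • p + β • q) • x₁
          = α • (x₃ - p • x₁) + β • (x₃ - q • x₁) := by
        have : α • (x₃ - p • x₁) + β • (x₃ - q • x₁)
            = (α + β) • x₃ - (α • p + β • q) • x₁ := by
          rw [smul_sub, smul_sub, add_smul, smul_eq_mul, smul_eq_mul,
            smul_smul, smul_smul, add_smul]
          abel
        rw [this, hαβ, one_smul]
      rw [hcomb]
      calc ‖α • (x₃ - p • x₁) + β • (x₃ - q • x₁)‖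
          ≤ ‖α • (x₃ - p • x₁)‖ + ‖β • (x₃ - q • x₁)‖ := norm_add_le _ _
        _ = α * ‖x₃ - p • x₁‖ + β * ‖x₃ - q • x₁‖ := by
            rw [norm_smul, norm_smul, Real.norm_eq_abs, Real.norm_eq_abs,
              abs_of_nonneg hα, abs_of_nonneg hβ]
        _ ≤ α * 1 + β * 1 := by
            gcongr
            · exact hp.2
            · exact hq.2
        _ = 1 := by rw [mul_one, mul_one, hαβ]
  -- the flat direction is x₁
  obtain ⟨u, v, huv, hu1, hv1, hxo, hflat⟩ := hx₃.2
  obtain ⟨s, t0, hs, ht0, hst, hx3⟩ := hxo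
  have hφ₃u : φ₃ u ≤ 1 := by have := hbd φ₃ hφ₃n u; rwa [hu1] at this
  have hφ₃v : φ₃ v ≤ 1 := by have := hbd φ₃ hφ₃n v; rwa [hv1] at this
  have hx3φ : s * φ₃ u + t0 * φ₃ v = 1 := by
    have := congrArg φ₃ hx3
    rw [map_add, map_smul, map_smul, smul_eq_mul, smul_eq_mul, hφ₃x] at this
    exact this
  have hφ₃u1 : φ₃ u = 1 := by
    by_contra h
    have hlt : φ₃ u < 1 := lt_of_le_of_ne hφ₃u h
    have h1 := mul_lt_mul_of_pos_left hlt hs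
    have h2 := mul_le_mul_of_nonneg_left hφ₃v ht0.le
    rw [mul_one] at h1 h2
    linarith
  have hφ₃v1 : φ₃ v = 1 := by
    by_contra h
    have hlt : φ₃ v < 1 := lt_of_le_of_ne hφ₃v h
    have h1 := mul_lt_mul_of_pos_left hlt ht0
    have h2 := mul_le_mul_of_nonneg_left hφ₃u hs.le
    rw [mul_one] at h1 h2
    linarith
  -- kernel of φ₃ is span of x₁
  haveI hFD : FiniteDimensional ℝ X := FiniteDimensional.of_finrank_pos (by rw [hdim]; norm_num)
  have hker : LinearMap.ker (φ₃ : X →ₗ[ℝ] ℝ) = Submodule.span ℝ {x₁} := by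
    have hrange : LinearMap.range (φ₃ : X →ₗ[ℝ] ℝ) = ⊤ := by
      rw [LinearMap.range_eq_top]
      intro r
      exact ⟨r • x₃, by simp [hφ₃x]⟩
    have hrk := LinearMap.finrank_range_add_finrank_ker (φ₃ : X →ₗ[ℝ] ℝ)
    rw [hrange, hdim] at hrk
    have hrk1 : Module.finrank ℝ (⊤ : Submodule ℝ ℝ) = 1 := by
      rw [finrank_top, Module.finrank_self]
    rw [hrk1] at hrk
    have hkd : Module.finrank ℝ (LinearMap.ker (φ₃ : X →ₗ[ℝ] ℝ)) = 1 := by omega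
    have hle : Submodule.span ℝ {x₁} ≤ LinearMap.ker (φ₃ : X →ₗ[ℝ] ℝ) := by
      rw [Submodule.span_le, Set.singleton_subset_iff]
      exact hφ₃x₁
    exact (Submodule.eq_of_le_of_finrank_le hle
      (by rw [hkd, finrank_span_singleton hx₁0])).symm
  have hvu : ∃ c : ℝ, v - u = c • x₁ := by
    have hmem' : v - u ∈ LinearMap.ker (φ₃ : X →ₗ[ℝ] ℝ) := by
      rw [LinearMap.mem_ker]
      show φ₃ (v - u) = 0
      rw [map_sub, hφ₃u1, hφ₃v1, sub_self]
    rw [hker, Submodule.mem_span_singleton] at hmem'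
    obtain ⟨c, hc⟩ := hmem'
    exact ⟨c, hc.symm⟩
  obtain ⟨c, hc⟩ := hvu
  have hc0 : c ≠ 0 := by
    intro h
    rw [h, zero_smul, sub_eq_zero] at hc
    exact huv hc.symm
  -- points near x₃ along x₁ stay on the sphere
  have hseg : ∀ r : ℝ, |r| ≤ min s t0 → ‖x₃ + r • (v - u)‖ = 1 := by
    intro r hr
    obtain ⟨hrl, hrr⟩ := abs_le.mp hr
    have hpt : x₃ + r • (v - u) = (s - r) • u + (t0 + r) • v := by
      rw [← hx3, smul_sub, sub_smul, add_smul]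
      abel
    refine hflat _ ⟨s - r, t0 + r, ?_, ?_, by linarith, hpt.symm⟩
    · have : r ≤ s := le_trans hrr (min_le_left _ _); linarith
    · have : r ≥ -t0 := by
        have := min_le_right s t0; linarith
      linarith
  set m := min s t0 with hm
  have hm0 : 0 < m := lt_min hs ht0
  set ε : ℝ := min 1 (m * |c|) with hε
  have hε0 : 0 < ε := lt_min one_pos (mul_pos hm0 (abs_pos.mpr hc0))
  have hε1 : ε ≤ 1 := min_le_left _ _
  have hεm : ε ≤ m * |c| := min_le_right _ _
  have hεnorm : ∀ σ : ℝ, |σ| = 1 → ‖x₃ + (σ * ε) • x₁‖ = 1 := by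
    intro σ hσ
    have hre : (σ * ε / c) • (v - u) = (σ * ε) • x₁ := by
      rw [hc, smul_smul, div_mul_cancel₀ _ hc0]
    have habs : |σ * ε / c| ≤ m := by
      rw [abs_div, abs_mul, hσ, one_mul, abs_of_pos hε0]
      rw [div_le_iff₀ (abs_pos.mpr hc0)]
      linarith
    have := hseg (σ * ε / c) habs
    rwa [hre] at this
  have hP : (ε:ℝ) ∈ I := by
    refine ⟨⟨by linarith, hε1⟩, ?_⟩
    have := hεnorm (-1) (by norm_num)
    rw [neg_one_mul, neg_smul, ← sub_eq_add_neg] at this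
    linarith [this.le]
  have hN : (-ε:ℝ) ∈ I := by
    refine ⟨⟨by linarith, by linarith⟩, ?_⟩
    have := hεnorm 1 (by norm_num)
    rw [one_mul] at this
    rw [neg_smul, sub_neg_eq_add]
    linarith [this.le]
  -- I is a closed interval
  have hInonempty : I.Nonempty := ⟨0, hInE⟩
  set a : ℝ := sInf I with ha
  set b : ℝ := sSup I with hb
  have haI : a ∈ I := hIclosed.csInf_mem hInonempty hIbddB
  have hbI : b ∈ I := hIclosed.csSup_mem hInonempty hIbddA
  have hab : a < b := by
    have h1 : a ≤ -ε := csInf_le hIbddB hN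
    have h2 : ε ≤ b := le_csSup hIbddA hP
    linarith
  have hIeq : I = Set.Icc a b := by
    apply Set.Subset.antisymm
    · intro t ht
      exact ⟨csInf_le hIbddB ht, le_csSup hIbddA ht⟩
    · exact hIconv.ordConnected.out haI hbI
  -- conclude
  refine ⟨x₁, x₂, x₃, a • x₁, b • x₁, ?_, ?_⟩
  · intro h
    have : (a - b) • x₁ = 0 := by rw [sub_smul, h, sub_self]
    rcases smul_eq_zero.mp this with h' | h'
    · exact (ne_of_lt hab) (by linarith [sub_eq_zero.mp (by linarith [h'] : a - b = 0)])
    · exact hx₁0 h'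
  · have himg := image_segment ℝ (LinearMap.toSpanSingleton ℝ X x₁).toAffineMap a b
    have hco : (fun t : ℝ => t • x₁) = ⇑(LinearMap.toSpanSingleton ℝ X x₁).toAffineMap := rfl
    rw [hft, hIeq, ← segment_eq_Icc hab.le, hco, himg]
    rfl
end

section
/- Let λ ≥ 2 be an integer with λ not divisible by 3, and let X be a λ-normed plane. Then X does not satisfy the first non-uniqueness condition: there do not exist unit vectors x₁, x₂, x₃ in X, each of the first type, together with norming functionals φ₁, φ₂, φ₃ for x₁, x₂, x₃ satisfying φ₁ + φ₂ + φ₃ = 0. -/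
open Real

/-- The vertices of a regular 2λ-gon centered at the origin, with circumradius r and
initial angle θ. -/
noncomputable def polyVerts (lam : ℕ) (r θ : ℝ) : Fin (2 * lam) → ℝ × ℝ :=
  fun k => (r * Real.cos (θ + (k : ℕ) * π / lam), r * Real.sin (θ + (k : ℕ) * π / lam))

/-- N : ℝ² → ℝ is a norm. -/
def IsNormOn (N : ℝ × ℝ → ℝ) : Prop :=
  (∀ x y : ℝ × ℝ, N (x + y) ≤ N x + N y) ∧
  (∀ (c : ℝ) (x : ℝ × ℝ), N (c • x) = |c| * N x) ∧
  (∀ x : ℝ × ℝ, N x = 0 → x = 0)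

/-- N is a λ-plane norm: a norm on ℝ² whose closed unit ball is a regular 2λ-gon
centered at the origin. -/
def IsLambdaNorm (lam : ℕ) (N : ℝ × ℝ → ℝ) : Prop :=
  IsNormOn N ∧ ∃ r > (0 : ℝ), ∃ θ : ℝ,
    {x : ℝ × ℝ | N x ≤ 1} = convexHull ℝ (Set.range (polyVerts lam r θ))

/-- φ is a norming functional for x with respect to the norm N: the dual norm of φ is
at most one (‖φ‖ ≤ 1, which together with φ x = N x = 1 for the unit vectors considered
gives ‖φ‖ = 1) and φ x = N x. -/
def IsNormingN (N : ℝ × ℝ → ℝ) (φ : (ℝ × ℝ) →ₗ[ℝ] ℝ) (x : ℝ × ℝ) : Prop :=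
  (∀ y : ℝ × ℝ, |φ y| ≤ N y) ∧ φ x = N x

/-- A unit vector (w.r.t. N) of the first type: an interior point of a flattening of the
unit circle of N. -/
def FirstTypeN (N : ℝ × ℝ → ℝ) (x : ℝ × ℝ) : Prop :=
  N x = 1 ∧ ∃ u v : ℝ × ℝ, u ≠ v ∧ N u = 1 ∧ N v = 1 ∧
    x ∈ openSegment ℝ u v ∧ ∀ z ∈ segment ℝ u v, N z = 1

/-- A unit vector (w.r.t. N) of the zero type: not of the first type. -/
def ZeroTypeN (N : ℝ × ℝ → ℝ) (x : ℝ × ℝ) : Prop :=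
  N x = 1 ∧ ¬ FirstTypeN N x

/-- The Fermat–Torricelli set of a finite tuple of points of ℝ² with respect to the
norm N. -/
def ftSetN (N : ℝ × ℝ → ℝ) {n : ℕ} (x : Fin n → ℝ × ℝ) : Set (ℝ × ℝ) :=
  {p | ∀ q : ℝ × ℝ, ∑ i, N (p - x i) ≤ ∑ i, N (q - x i)}

/-! A norming functional of a point inside an edge of the polygon attains its maximum `1` over
the ball at two distinct vertices. Evaluated at the vertices it is `m ↦ ρ cos (β + m π / λ)`,
and a maximum of such a sequence attained at two vertices forces it to be the functional
exposing an edge: up to the factor `r cos (π / 2λ)` its coefficient vector is the unit vector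
at angle `θ + (M + 1/2) π / λ`. Three such functionals summing to zero give three unit vectors
summing to zero, hence pairwise at angle `± 2π/3`; as their angles differ by multiples of
`π / λ`, this forces `3 ∣ λ`. -/

open Set

section Convex

variable {E : Type*} [AddCommGroup E] [Module ℝ E]

lemma LinearMap.eq_of_mem_openSegment_of_le (φ : E →ₗ[ℝ] ℝ) {u v x : E} {c : ℝ}
    (hu : φ u ≤ c) (hv : φ v ≤ c) (hx : x ∈ openSegment ℝ u v) (hφx : φ x = c) :
    φ u = c ∧ φ v = c := by
  obtain ⟨a, b, ha, hb, hab, rfl⟩ := hx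
  simp only [map_add, map_smul, smul_eq_mul] at hφx
  have hslack : a * (c - φ u) + b * (c - φ v) = 0 := by linear_combination c * hab - hφx
  have hau : a * (c - φ u) = 0 := by
    nlinarith [mul_nonneg ha.le (sub_nonneg.2 hu), mul_nonneg hb.le (sub_nonneg.2 hv)]
  have hbv : b * (c - φ v) = 0 := by linarith
  constructor
  · linarith [(mul_eq_zero.1 hau).resolve_left ha.ne']
  · linarith [(mul_eq_zero.1 hbv).resolve_left hb.ne']

lemma LinearMap.mem_convexHull_inter_of_eq {s : Set E} (φ : E →ₗ[ℝ] ℝ) {c : ℝ}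
    (hs : ∀ y ∈ s, φ y ≤ c) {z : E} (hz : z ∈ convexHull ℝ s) (hφz : φ z = c) :
    z ∈ convexHull ℝ (s ∩ {y | φ y = c}) := by
  set F := convexHull ℝ (s ∩ {y | φ y = c})
  suffices convexHull ℝ s ⊆ {x | φ x ≤ c ∧ (φ x = c → x ∈ F)} from (this hz).2 hφz
  refine convexHull_min (fun y hy => ⟨hs y hy, fun h => subset_convexHull ℝ _ ⟨hy, h⟩⟩) ?_
  rintro x ⟨hxc, hxF⟩ y ⟨hyc, hyF⟩ a b ha hb hab
  refine ⟨?_, fun h => ?_⟩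
  · calc φ (a • x + b • y) = a * φ x + b * φ y := by simp
      _ ≤ a * c + b * c := by gcongr
      _ = c := by rw [← add_mul, hab, one_mul]
  rcases ha.eq_or_lt with rfl | ha
  · obtain rfl : b = 1 := by linarith
    simp only [zero_smul, one_smul, zero_add] at h ⊢
    exact hyF h
  rcases hb.eq_or_lt with rfl | hb
  · obtain rfl : a = 1 := by linarith
    simp only [zero_smul, one_smul, add_zero] at h ⊢
    exact hxF h
  obtain ⟨hx, hy⟩ := φ.eq_of_mem_openSegment_of_le hxc hyc ⟨a, b, ha, hb, hab, rfl⟩ h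
  exact convex_convexHull ℝ _ (hxF hx) (hyF hy) ha.le hb.le hab

lemma LinearMap.nontrivial_inter_of_eq {s : Set E} (φ : E →ₗ[ℝ] ℝ) {c : ℝ}
    (hs : ∀ y ∈ s, φ y ≤ c) {u v : E} (hu : u ∈ convexHull ℝ s) (hv : v ∈ convexHull ℝ s)
    (huv : u ≠ v) (hφu : φ u = c) (hφv : φ v = c) : (s ∩ {y | φ y = c}).Nontrivial := by
  by_contra hsub
  rw [not_nontrivial_iff] at hsub
  have hu' := φ.mem_convexHull_inter_of_eq hs hu hφu
  have hv' := φ.mem_convexHull_inter_of_eq hs hv hφv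
  rcases hsub.eq_empty_or_singleton with h | ⟨y, h⟩ <;>
    simp only [h, convexHull_empty, convexHull_singleton, mem_empty_iff_false,
      mem_singleton_iff] at hu' hv'
  exact huv (hu'.trans hv'.symm)

end Convex

lemma LinearMap.apply_eq_fst_mul_add_snd_mul (φ : ℝ × ℝ →ₗ[ℝ] ℝ) (p : ℝ × ℝ) :
    φ p = p.1 * φ (1, 0) + p.2 * φ (0, 1) := by
  calc φ p = φ (p.1 • ((1 : ℝ), (0 : ℝ)) + p.2 • ((0 : ℝ), (1 : ℝ))) := by
        congr 1; ext <;> simp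
    _ = p.1 * φ (1, 0) + p.2 * φ (0, 1) := by
      rw [map_add, map_smul, map_smul, smul_eq_mul, smul_eq_mul]

lemma exists_nonneg_eq_mul_cos_sin (a b : ℝ) : ∃ s δ : ℝ, 0 ≤ s ∧ a = s * cos δ ∧ b = s * sin δ :=
  ⟨‖(⟨a, b⟩ : ℂ)‖, Complex.arg ⟨a, b⟩, norm_nonneg _, (Complex.norm_mul_cos_arg ⟨a, b⟩).symm,
    (Complex.norm_mul_sin_arg ⟨a, b⟩).symm⟩

lemma exists_int_abs_add_mul_le (x : ℝ) {h : ℝ} (hh : 0 < h) : ∃ m : ℤ, |x + m * h| ≤ h / 2 := by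
  refine ⟨-round (x / h), ?_⟩
  calc |x + ((-round (x / h) : ℤ) : ℝ) * h| = |(x / h - round (x / h)) * h| := by
        congr 1; push_cast; field_simp; ring
    _ = |x / h - round (x / h)| * h := by rw [abs_mul, abs_of_pos hh]
    _ ≤ 1 / 2 * h := by gcongr; exact abs_sub_round _
    _ = h / 2 := by ring

lemma cos_half_le_of_forall_cos_add_int_mul_le {β h c : ℝ} (hh : 0 < h) (hh2π : h ≤ 2 * π)
    (hc : ∀ m : ℤ, cos (β + m * h) ≤ c) : cos (h / 2) ≤ c := by
  obtain ⟨m, hm⟩ := exists_int_abs_add_mul_le β hh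
  calc cos (h / 2) ≤ cos |β + m * h| :=
        cos_le_cos_of_nonneg_of_le_pi (abs_nonneg _) (by linarith) hm
    _ ≤ c := by rw [cos_abs]; exact hc m

lemma exists_int_abs_add_mul_two_pi_le_of_cos_le {x c : ℝ} (hc : 0 ≤ c)
    (hcos : cos c ≤ cos x) : ∃ t : ℤ, |x + t * (2 * π)| ≤ c := by
  obtain ⟨t, ht⟩ := exists_int_abs_add_mul_le x two_pi_pos
  refine ⟨t, not_lt.mp fun hlt => ?_⟩
  have := cos_lt_cos_of_nonneg_of_le_pi hc (by linarith) hlt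
  rw [cos_abs, cos_add_int_mul_two_pi] at this
  linarith

theorem cos_sub_eq_neg_half_of_sum_eq_zero {a b c : ℝ} (hcos : cos a + cos b + cos c = 0)
    (hsin : sin a + sin b + sin c = 0) : cos (a - b) = -1 / 2 := by
  have hc : cos c = -(cos a + cos b) := by linarith
  have hs : sin c = -(sin a + sin b) := by linarith
  have hc1 := sin_sq_add_cos_sq c
  rw [hc, hs] at hc1
  rw [cos_sub]
  linear_combination hc1 / 2 - sin_sq_add_cos_sq a / 2 - sin_sq_add_cos_sq b / 2

theorem three_dvd_of_cos_int_mul_eq_neg_half {lam : ℕ} {d : ℤ}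
    (h : cos (d * (π / lam)) = -1 / 2) : 3 ∣ lam := by
  rcases eq_or_ne lam 0 with rfl | hlam
  · exact dvd_zero 3
  have hl : (lam : ℝ) ≠ 0 := Nat.cast_ne_zero.2 hlam
  have h23 : cos (2 * π / 3) = -1 / 2 := by
    rw [show 2 * π / 3 = π - π / 3 by ring, cos_pi_sub, cos_pi_div_three]; ring
  obtain ⟨n, hn | hn⟩ := cos_eq_cos_iff.1 (h23.trans h.symm)
  · have : ((3 * d : ℤ) : ℝ) = ((6 * (n * lam) + 2 * lam : ℤ) : ℝ) := by
      push_cast; field_simp at hn; linarith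
    have : 3 * d = 6 * (n * lam) + 2 * lam := by exact_mod_cast this
    omega
  · have : ((3 * d : ℤ) : ℝ) = ((6 * (n * lam) - 2 * lam : ℤ) : ℝ) := by
      push_cast; field_simp at hn; linarith
    have : 3 * d = 6 * (n * lam) - 2 * lam := by exact_mod_cast this
    omega

theorem exists_eq_half_step_of_cos_max {lam : ℕ} (hlam : lam ≠ 0) {β : ℝ} {j k : ℤ}
    (hjk : ¬ (2 * lam : ℤ) ∣ j - k)
    (hcos : cos (β + k * (π / lam)) = cos (β + j * (π / lam)))
    (hmax : ∀ m : ℤ, cos (β + m * (π / lam)) ≤ cos (β + j * (π / lam))) :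
    cos (β + j * (π / lam)) = cos (π / (2 * lam)) ∧
      ∃ M t : ℤ, β = t * (2 * π) - (M + 1 / 2) * (π / lam) := by
  have hl : (0 : ℝ) < lam := Nat.cast_pos.2 (Nat.pos_of_ne_zero hlam)
  -- `A := β + j π / λ` is `≡ -(β + k π / λ)` mod `2π`, so `A = q π / 2λ` with `q ≢ 0` mod `4λ`;
  -- some lattice point lies within `π / 2λ` of `2πℤ`, so by maximality so does `A`: `q ≡ ±1`.
  obtain ⟨n, hn | hn⟩ := cos_eq_cos_iff.1 hcos.symm
  · refine absurd ⟨-n, ?_⟩ hjk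
    field_simp at hn
    have : ((j - k : ℤ) : ℝ) * π = ((2 * lam * -n : ℤ) : ℝ) * π := by push_cast; linarith
    exact_mod_cast mul_right_cancel₀ pi_ne_zero this
  have hstep : π / lam ≤ 2 * π := by
    rw [div_le_iff₀ hl]; nlinarith [pi_pos, (Nat.one_le_cast (α := ℝ)).2 (Nat.pos_of_ne_zero hlam)]
  have hhalf := cos_half_le_of_forall_cos_add_int_mul_le (by positivity) hstep hmax
  rw [div_div, mul_comm] at hhalf
  obtain ⟨t, ht⟩ := exists_int_abs_add_mul_two_pi_le_of_cos_le (by positivity) hhalf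
  obtain ⟨q, hq_def⟩ : ∃ q : ℤ, q = 2 * n * lam + j - k + 4 * lam * t := ⟨_, rfl⟩
  have hq : β + j * (π / lam) + t * (2 * π) = q * (π / (2 * lam)) := by
    rw [hq_def]; push_cast; field_simp at hn ⊢; linear_combination hn
  have hh : 0 < π / (2 * lam) := div_pos pi_pos (by linarith)
  have hq1 : |q| ≤ 1 := by
    rw [hq, abs_mul, abs_of_pos hh] at ht
    exact_mod_cast (mul_le_iff_le_one_left hh).1 ht
  have hq0 : q ≠ 0 := fun h0 => hjk ⟨-n - 2 * t, by linear_combination h0 - hq_def⟩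
  have hcos_q : cos (β + j * (π / lam)) = cos (q * (π / (2 * lam))) := by
    rw [← hq, cos_add_int_mul_two_pi]
  rcases (by rw [abs_le] at hq1; omega : q = 1 ∨ q = -1) with rfl | rfl
  · refine ⟨by simpa using hcos_q, j - 1, -t, ?_⟩
    push_cast at hq ⊢; linear_combination hq
  · refine ⟨by simpa using hcos_q, j, -t, ?_⟩
    push_cast at hq ⊢; linear_combination hq

lemma polyVerts_apply_eq (lam : ℕ) (r θ : ℝ) (k : Fin (2 * lam)) :
    polyVerts lam r θ k =
      (r * cos (θ + ((k : ℕ) : ℤ) * (π / lam)), r * sin (θ + ((k : ℕ) : ℤ) * (π / lam))) := by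
  simp only [polyVerts, Int.cast_natCast, mul_div_assoc]

lemma exists_polyVerts_eq {lam : ℕ} (hlam : lam ≠ 0) (r θ : ℝ) (m : ℤ) :
    ∃ k : Fin (2 * lam),
      polyVerts lam r θ k = (r * cos (θ + m * (π / lam)), r * sin (θ + m * (π / lam))) := by
  have h2l : (0 : ℤ) < 2 * lam := by omega
  have hmod := Int.emod_nonneg m h2l.ne'
  refine ⟨⟨(m % (2 * lam)).toNat, by have := Int.emod_lt_of_pos m h2l; omega⟩, ?_⟩
  have hk : (((m % (2 * lam)).toNat : ℤ) : ℝ) = m - (m / (2 * lam) : ℤ) * (2 * lam) := by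
    rw [Int.toNat_of_nonneg hmod, Int.emod_def]; push_cast; ring
  have hl : (lam : ℝ) ≠ 0 := Nat.cast_ne_zero.2 hlam
  have harg : θ + (((m % (2 * lam)).toNat : ℤ) : ℝ) * (π / lam) =
      θ + m * (π / lam) - (m / (2 * lam) : ℤ) * (2 * π) := by
    rw [hk]; field_simp; ring
  rw [polyVerts_apply_eq, harg, cos_sub_int_mul_two_pi, sin_sub_int_mul_two_pi]

/-- The direction of the outer normal of the edge from vertex `M` to vertex `M + 1` of the
polygon `polyVerts lam r θ`. -/
noncomputable def edgeNormalAngle (lam : ℕ) (θ : ℝ) (M : ℤ) : ℝ := θ + (M + 1 / 2) * (π / lam)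

theorem exists_edgeNormalAngle_of_polyVerts_eq_one {lam : ℕ} (hlam : lam ≠ 0) {r θ : ℝ}
    (hr : 0 < r) {φ : ℝ × ℝ →ₗ[ℝ] ℝ} (hle : ∀ k, φ (polyVerts lam r θ k) ≤ 1)
    {j k : Fin (2 * lam)} (hjk : j ≠ k) (hj : φ (polyVerts lam r θ j) = 1)
    (hk : φ (polyVerts lam r θ k) = 1) :
    ∃ M : ℤ, r * cos (π / (2 * lam)) * φ (1, 0) = cos (edgeNormalAngle lam θ M) ∧
      r * cos (π / (2 * lam)) * φ (0, 1) = sin (edgeNormalAngle lam θ M) := by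
  obtain ⟨s, δ, hs, ha, hb⟩ := exists_nonneg_eq_mul_cos_sin (φ (1, 0)) (φ (0, 1))
  have hval : ∀ m : ℤ, φ (r * cos (θ + m * (π / lam)), r * sin (θ + m * (π / lam))) =
      r * s * cos (θ - δ + m * (π / lam)) := fun m => by
    rw [φ.apply_eq_fst_mul_add_snd_mul, ha, hb,
      show θ - δ + m * (π / lam) = θ + m * (π / lam) - δ by ring, cos_sub]
    ring
  have hmax : ∀ m : ℤ, r * s * cos (θ - δ + m * (π / lam)) ≤ 1 := fun m => by
    obtain ⟨i, hi⟩ := exists_polyVerts_eq hlam r θ m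
    rw [← hval, ← hi]; exact hle i
  rw [polyVerts_apply_eq, hval] at hj hk
  have hrs : 0 < r * s := by
    refine (mul_nonneg hr.le hs).lt_of_ne fun h => ?_
    rw [← h, zero_mul] at hj; exact zero_ne_one hj
  have hjk' : ¬ (2 * lam : ℤ) ∣ (j : ℕ) - (k : ℕ) := fun hd => hjk <| Fin.ext <| by
    have := Int.eq_zero_of_abs_lt_dvd hd (by rw [abs_lt]; omega)
    omega
  obtain ⟨hcos, M, t, hβ⟩ := exists_eq_half_step_of_cos_max hlam hjk'
    (mul_left_cancel₀ hrs.ne' (hk.trans hj.symm))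
    (fun m => le_of_mul_le_mul_left ((hmax m).trans hj.ge) hrs)
  have hδ : δ = edgeNormalAngle lam θ M - t * (2 * π) := by
    rw [edgeNormalAngle]; linarith
  have hrsc : r * s * cos (π / (2 * lam)) = 1 := by rw [← hcos, hj]
  refine ⟨M, ?_, ?_⟩
  · rw [ha, show cos (edgeNormalAngle lam θ M) = cos δ by rw [hδ, cos_sub_int_mul_two_pi]]
    linear_combination cos δ * hrsc
  · rw [hb, show sin (edgeNormalAngle lam θ M) = sin δ by rw [hδ, sin_sub_int_mul_two_pi]]
    linear_combination sin δ * hrsc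

theorem exists_edgeNormalAngle_of_isNormingN {lam : ℕ} (hlam : lam ≠ 0) {N : ℝ × ℝ → ℝ}
    {r θ : ℝ} (hr : 0 < r)
    (hball : {x : ℝ × ℝ | N x ≤ 1} = convexHull ℝ (range (polyVerts lam r θ)))
    {x : ℝ × ℝ} {φ : ℝ × ℝ →ₗ[ℝ] ℝ} (hx : FirstTypeN N x) (hφ : IsNormingN N φ x) :
    ∃ M : ℤ, r * cos (π / (2 * lam)) * φ (1, 0) = cos (edgeNormalAngle lam θ M) ∧
      r * cos (π / (2 * lam)) * φ (0, 1) = sin (edgeNormalAngle lam θ M) := by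
  obtain ⟨hx1, u, v, huv, hu, hv, hxuv, -⟩ := hx
  obtain ⟨hφN, hφx⟩ := hφ
  have hle : ∀ y, N y ≤ 1 → φ y ≤ 1 := fun y hy => (le_abs_self _).trans ((hφN y).trans hy)
  have hmem : ∀ y, N y ≤ 1 ↔ y ∈ convexHull ℝ (range (polyVerts lam r θ)) :=
    Set.ext_iff.1 hball
  have hvert : ∀ y ∈ range (polyVerts lam r θ), φ y ≤ 1 := fun y hy =>
    hle y ((hmem y).2 (subset_convexHull ℝ _ hy))
  obtain ⟨hφu, hφv⟩ :=
    φ.eq_of_mem_openSegment_of_le (hle u hu.le) (hle v hv.le) hxuv (hφx.trans hx1)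
  obtain ⟨_, ⟨⟨j, rfl⟩, hj⟩, _, ⟨⟨k, rfl⟩, hk⟩, hjk⟩ :=
    φ.nontrivial_inter_of_eq hvert ((hmem u).1 hu.le) ((hmem v).1 hv.le) huv hφu hφv
  exact exists_edgeNormalAngle_of_polyVerts_eq_one hlam hr (fun i => hvert _ ⟨i, rfl⟩)
    (fun h => hjk (congrArg _ h)) hj hk

theorem lambda_plane_no_first_condition_general
    (lam : ℕ) (h3 : ¬ 3 ∣ lam)
    (N : ℝ × ℝ → ℝ) (hN : IsLambdaNorm lam N) :
    ¬ ∃ (x₁ x₂ x₃ : ℝ × ℝ) (φ₁ φ₂ φ₃ : (ℝ × ℝ) →ₗ[ℝ] ℝ),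
        FirstTypeN N x₁ ∧ FirstTypeN N x₂ ∧ FirstTypeN N x₃ ∧
        IsNormingN N φ₁ x₁ ∧ IsNormingN N φ₂ x₂ ∧ IsNormingN N φ₃ x₃ ∧
        φ₁ + φ₂ + φ₃ = 0 := by
  rintro ⟨x₁, x₂, x₃, φ₁, φ₂, φ₃, h₁, h₂, h₃, n₁, n₂, n₃, hsum⟩
  obtain ⟨-, r, hr, θ, hball⟩ := hN
  have hlam : lam ≠ 0 := by rintro rfl; exact h3 (dvd_zero 3)
  obtain ⟨M₁, hc₁, hs₁⟩ := exists_edgeNormalAngle_of_isNormingN hlam hr hball h₁ n₁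
  obtain ⟨M₂, hc₂, hs₂⟩ := exists_edgeNormalAngle_of_isNormingN hlam hr hball h₂ n₂
  obtain ⟨M₃, hc₃, hs₃⟩ := exists_edgeNormalAngle_of_isNormingN hlam hr hball h₃ n₃
  have h10 : φ₁ (1, 0) + φ₂ (1, 0) + φ₃ (1, 0) = 0 := by
    simpa using LinearMap.congr_fun hsum (1, 0)
  have h01 : φ₁ (0, 1) + φ₂ (0, 1) + φ₃ (0, 1) = 0 := by
    simpa using LinearMap.congr_fun hsum (0, 1)
  have hcos := cos_sub_eq_neg_half_of_sum_eq_zero (a := edgeNormalAngle lam θ M₁)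
    (b := edgeNormalAngle lam θ M₂) (c := edgeNormalAngle lam θ M₃)
    (by rw [← hc₁, ← hc₂, ← hc₃]; linear_combination r * cos (π / (2 * lam)) * h10)
    (by rw [← hs₁, ← hs₂, ← hs₃]; linear_combination r * cos (π / (2 * lam)) * h01)
  rw [show edgeNormalAngle lam θ M₁ - edgeNormalAngle lam θ M₂ = (M₁ - M₂ : ℤ) * (π / lam) by
    simp only [edgeNormalAngle]; push_cast; ring] at hcos
  exact h3 (three_dvd_of_cos_int_mul_eq_neg_half hcos)

/-- If λ is not divisible by 3, a λ-normed plane does not satisfy the first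
non-uniqueness condition. -/
theorem lambda_plane_no_first_condition
    (lam : ℕ) (hlam : 2 ≤ lam) (h3 : ¬ 3 ∣ lam)
    (N : ℝ × ℝ → ℝ) (hN : IsLambdaNorm lam N) :
    ¬ ∃ (x₁ x₂ x₃ : ℝ × ℝ) (φ₁ φ₂ φ₃ : (ℝ × ℝ) →ₗ[ℝ] ℝ),
        FirstTypeN N x₁ ∧ FirstTypeN N x₂ ∧ FirstTypeN N x₃ ∧
        IsNormingN N φ₁ x₁ ∧ IsNormingN N φ₂ x₂ ∧ IsNormingN N φ₃ x₃ ∧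
        φ₁ + φ₂ + φ₃ = 0 :=
  lambda_plane_no_first_condition_general lam h3 N hN
end

section
/- Let λ ≥ 2 be an integer and let X be a λ-normed plane. Then X does not satisfy the third non-uniqueness condition: there do not exist a unit vector x₃ of the first type and unit vectors x₁, x₂ of the zero type with x₂ = −x₁, together with norming functionals φ₁, φ₂, φ₃ for x₁, x₂, x₃, such that φ₁ + φ₂ + φ₃ = 0 and, for i = 1, 2, xᵢ is the only unit vector y with φᵢ(y) = 1. -/
open Real

/-!
Write `P k` (`k ∈ ℤ`) for the vertices of the polygon and `Q = quarterTurn (P m)`. The uniqueness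
conditions make `x₁ = P m` a vertex at which both `φ₁` and `-φ₂` equal `1` and are `< 1` at all other
vertices, in particular at `P (m ± 1) = cos (π/λ) P m ± sin (π/λ) Q`; this gives
`|φ₁ Q| sin (π/λ) < 1 - cos (π/λ)`, and the same for `-φ₂`. Hence `φ₃ = -φ₂ - φ₁` vanishes at `P m`,
so `φ₃ (P (m + t)) = sin (tπ/λ) φ₃ Q` with `|φ₃ Q| sin (π/λ) < 2 (1 - cos (π/λ))`. On the other
hand `φ₃` equals `1` on the flat piece of the sphere through `x₃`, hence at two distinct vertices.
This is impossible: for `λ ≥ 4` because `2 (1 - cos x) < sin x` on `(0, π/4]`, for `λ = 3` because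
`|sin (kπ/3)| ≤ sin (π/3)`, and for `λ = 2` because `sin (kπ/2) φ₃ Q = 1` determines `k` mod 4.
-/

section Face

variable {E : Type*} [AddCommGroup E] [Module ℝ E] {φ : E →ₗ[ℝ] ℝ} {c : ℝ}

lemma mem_convexHull_setOf_apply_eq {V : Set E} (hV : ∀ v ∈ V, φ v ≤ c) {y : E}
    (hy : y ∈ convexHull ℝ V) (hφy : φ y = c) : y ∈ convexHull ℝ {v ∈ V | φ v = c} := by
  classical
  rw [convexHull_eq] at hy
  obtain ⟨ι, t, w, z, hw₀, hw₁, hz, rfl⟩ := hy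
  have hφy' : ∑ i ∈ t, w i * φ (z i) = c := by
    simpa [Finset.centerMass, hw₁, map_sum] using hφy
  have hgap : ∑ i ∈ t, w i * (c - φ (z i)) = 0 := by
    simp only [mul_sub, Finset.sum_sub_distrib, ← Finset.sum_mul, hw₁, hφy']
    ring
  have hgap_nonneg : ∀ i ∈ t, 0 ≤ w i * (c - φ (z i)) :=
    fun i hi => mul_nonneg (hw₀ i hi) (sub_nonneg.mpr (hV _ (hz i hi)))
  rw [← Finset.centerMass_filter_ne_zero]
  refine Finset.centerMass_mem_convexHull _ (fun i hi => hw₀ i (Finset.mem_filter.mp hi).1) ?_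
    fun i hi => ?_
  · rw [Finset.sum_filter_ne_zero, hw₁]
    exact one_pos
  · obtain ⟨hi, hwi⟩ := Finset.mem_filter.mp hi
    have := (Finset.sum_eq_zero_iff_of_nonneg hgap_nonneg).mp hgap i hi
    exact ⟨hz i hi, by linarith [(mul_eq_zero.mp this).resolve_left hwi]⟩

lemma apply_eq_of_mem_openSegment {u v x : E} (hx : x ∈ openSegment ℝ u v) (hu : φ u ≤ c)
    (hv : φ v ≤ c) (hφx : φ x = c) : φ u = c ∧ φ v = c := by
  obtain ⟨a, b, ha, hb, hab, rfl⟩ := hx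
  simp only [map_add, map_smul, smul_eq_mul] at hφx
  have hgap : a * (c - φ u) + b * (c - φ v) = 0 := by linear_combination c * hab - hφx
  obtain ⟨hgu, hgv⟩ := (add_eq_zero_iff_of_nonneg (mul_nonneg ha.le (sub_nonneg.mpr hu))
    (mul_nonneg hb.le (sub_nonneg.mpr hv))).mp hgap
  constructor
  · linarith [(mul_eq_zero.mp hgu).resolve_left ha.ne']
  · linarith [(mul_eq_zero.mp hgv).resolve_left hb.ne']

end Face

namespace IsNormOn

variable {N : ℝ × ℝ → ℝ}

lemma map_zero (hN : IsNormOn N) : N 0 = 0 := by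
  simpa using hN.2.1 0 0

lemma map_neg (hN : IsNormOn N) (x : ℝ × ℝ) : N (-x) = N x := by
  simpa using hN.2.1 (-1) x

lemma nonneg (hN : IsNormOn N) (x : ℝ × ℝ) : 0 ≤ N x := by
  have := hN.1 x (-x)
  rw [add_neg_cancel, hN.map_zero, hN.map_neg] at this
  linarith

/-- Otherwise some `t • p` with `t > 1` would lie in the ball, on which `ℓ ≤ ℓ p`. -/
lemma eq_one_of_ball_eq_convexHull (hN : IsNormOn N) {V : Set (ℝ × ℝ)}
    (hball : {x | N x ≤ 1} = convexHull ℝ V) {p : ℝ × ℝ} (hp : p ∈ V) (ℓ : ℝ × ℝ →ₗ[ℝ] ℝ)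
    (hℓ : ∀ v ∈ V, ℓ v ≤ ℓ p) (hℓp : 0 < ℓ p) : N p = 1 := by
  have hmem : ∀ x, N x ≤ 1 ↔ x ∈ convexHull ℝ V := fun x => Set.ext_iff.mp hball x
  refine le_antisymm ((hmem p).mpr (subset_convexHull ℝ V hp)) (not_lt.mp fun hlt => ?_)
  have hNp := hN.nonneg p
  set t := 2 / (1 + N p)
  have ht : 1 < t := by rw [lt_div_iff₀ (by linarith)]; linarith
  have htp : N (t • p) ≤ 1 := by
    rw [hN.2.1, abs_of_pos (by linarith), div_mul_eq_mul_div, div_le_one (by linarith)]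
    linarith
  have : ℓ (t • p) ≤ ℓ p :=
    convexHull_min hℓ (convex_halfSpace_le ℓ.isLinear (ℓ p)) ((hmem _).mp htp)
  rw [map_smul, smul_eq_mul] at this
  nlinarith

end IsNormOn

section UnitBall

variable {N : ℝ × ℝ → ℝ} {V : Set (ℝ × ℝ)} {φ : ℝ × ℝ →ₗ[ℝ] ℝ}

lemma apply_le_one_of_abs_le (hφ : ∀ y, |φ y| ≤ N y) {y : ℝ × ℝ} (hy : N y = 1) : φ y ≤ 1 :=
  (le_abs_self _).trans ((hφ y).trans_eq hy)

lemma mem_convexHull_setOf_apply_eq_one (hball : {x | N x ≤ 1} = convexHull ℝ V)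
    (hV : ∀ v ∈ V, N v = 1) (hφ : ∀ y, |φ y| ≤ N y) {w : ℝ × ℝ} (hw : N w ≤ 1) (hφw : φ w = 1) :
    w ∈ convexHull ℝ {v ∈ V | φ v = 1} :=
  mem_convexHull_setOf_apply_eq (fun v hv => apply_le_one_of_abs_le hφ (hV v hv))
    (Set.ext_iff.mp hball w |>.mp hw) hφw

def IsStrictNormingN (N : ℝ × ℝ → ℝ) (φ : ℝ × ℝ →ₗ[ℝ] ℝ) (x : ℝ × ℝ) : Prop :=
  IsNormingN N φ x ∧ N x = 1 ∧ ∀ y, N y = 1 → φ y = 1 → y = x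

namespace IsStrictNormingN

variable {x : ℝ × ℝ}

lemma apply_eq_one (h : IsStrictNormingN N φ x) : φ x = 1 :=
  h.1.2.trans h.2.1

lemma apply_lt_one (h : IsStrictNormingN N φ x) {y : ℝ × ℝ} (hy : N y = 1) (hyx : y ≠ x) :
    φ y < 1 :=
  lt_of_le_of_ne (apply_le_one_of_abs_le h.1.1 hy) fun hφy => hyx (h.2.2 y hy hφy)

lemma neg (hN : IsNormOn N) (h : IsStrictNormingN N φ x) : IsStrictNormingN N (-φ) (-x) := by
  refine ⟨⟨fun y => ?_, ?_⟩, ?_, fun y hy hφy => ?_⟩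
  · simpa using h.1.1 y
  · simpa [hN.map_neg] using h.1.2
  · rw [hN.map_neg, h.2.1]
  · rw [← h.2.2 (-y) (by rw [hN.map_neg, hy]) (by simpa using hφy), neg_neg]

lemma mem (h : IsStrictNormingN N φ x) (hball : {x | N x ≤ 1} = convexHull ℝ V)
    (hV : ∀ v ∈ V, N v = 1) : x ∈ V := by
  obtain ⟨v, hv, hφv⟩ := convexHull_nonempty_iff.mp
    ⟨x, mem_convexHull_setOf_apply_eq_one hball hV h.1.1 h.2.1.le h.apply_eq_one⟩
  rwa [← h.2.2 v (hV v hv) hφv]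

end IsStrictNormingN

lemma FirstTypeN.nontrivial_setOf_apply_eq_one (hball : {x | N x ≤ 1} = convexHull ℝ V)
    (hV : ∀ v ∈ V, N v = 1) (hφ : ∀ y, |φ y| ≤ N y) {x : ℝ × ℝ} (hx : FirstTypeN N x)
    (hφx : φ x = 1) : {v ∈ V | φ v = 1}.Nontrivial := by
  obtain ⟨-, u, v, huv, hu, hv, hxuv, -⟩ := hx
  obtain ⟨hφu, hφv⟩ := apply_eq_of_mem_openSegment hxuv (apply_le_one_of_abs_le hφ hu)
    (apply_le_one_of_abs_le hφ hv) hφx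
  refine Set.not_subsingleton_iff.mp fun hsub => huv ?_
  have hface := convexHull_eq_self.mpr (hsub.convex (𝕜 := ℝ))
  exact hsub (hface ▸ mem_convexHull_setOf_apply_eq_one hball hV hφ hu.le hφu)
    (hface ▸ mem_convexHull_setOf_apply_eq_one hball hV hφ hv.le hφv)

end UnitBall

/-- `2 (1 - cos x) ≤ x² < x - x³/6 < sin x` as soon as `x + x²/6 < 1`. -/
lemma two_mul_one_sub_cos_lt_sin {x : ℝ} (hx₀ : 0 < x) (hx : x ≤ π / 4) :
    2 * (1 - cos x) < sin x := by
  have hx₁ : x < 4 / 5 := by linarith [pi_lt_d2]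
  nlinarith [one_sub_sq_div_two_le_cos (x := x), sin_gt_sub_cube hx₀]

/-- `sin 3x = 3 sin x - 4 sin³ x` vanishes at `x = kπ/3`, so `sin² x` is `0` or `3/4`. -/
lemma sin_sq_int_mul_pi_div_three_le (k : ℤ) : sin (k * (π / 3)) ^ 2 ≤ 3 / 4 := by
  have h := sin_three_mul (k * (π / 3))
  rw [show 3 * (k * (π / 3)) = k * π by ring, sin_int_mul_pi] at h
  rcases mul_eq_zero.mp (show sin (k * (π / 3)) * (3 - 4 * sin (k * (π / 3)) ^ 2) = 0 by
    linear_combination -h) with h0 | h0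
  · rw [h0]; norm_num
  · linarith

lemma int_modEq_four_of_sin_mul_pi_div_two_eq {a b : ℤ}
    (h : sin (a * (π / 2)) = sin (b * (π / 2))) (ha : sin (a * (π / 2)) ≠ 0) :
    a ≡ b [ZMOD 4] := by
  have ha_odd : Odd a := by
    refine Int.not_even_iff_odd.mp fun ⟨n, hn⟩ => ha ?_
    rw [hn, sin_eq_zero_iff]
    exact ⟨n, by push_cast; ring⟩
  obtain ⟨n, hn⟩ := ha_odd
  have := pi_pos
  obtain ⟨k, hk | hk⟩ := sin_eq_sin_iff.mp h
  · have hk' : ((b - a : ℤ) : ℝ) = 4 * k := by push_cast; field_simp at hk; linarith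
    exact Int.modEq_iff_dvd.mpr ⟨k, by exact_mod_cast hk'⟩
  · -- `b π/2 = (2k + 1) π - a π/2`, and `a` odd turns `b ≡ 2 - a` into `b ≡ a` mod 4
    have hk' : ((b + a : ℤ) : ℝ) = 4 * k + 2 := by push_cast; field_simp at hk; linarith
    have hba : b + a = 4 * k + 2 := by exact_mod_cast hk'
    exact Int.modEq_iff_dvd.mpr ⟨k - n, by linarith⟩

lemma int_modEq_of_sin_mul_eq_one {lam : ℕ} (hlam : 2 ≤ lam) {S : ℝ}
    (hS : |S| * sin (π / lam) < 2 * (1 - cos (π / lam))) {a b : ℤ}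
    (ha : sin (a * (π / lam)) * S = 1) (hb : sin (b * (π / lam)) * S = 1) :
    a ≡ b [ZMOD 2 * lam] := by
  rcases (by omega : lam = 2 ∨ lam = 3 ∨ 4 ≤ lam) with rfl | rfl | h4
  · push_cast at ha hb ⊢
    have hS₀ : S ≠ 0 := right_ne_zero_of_mul_eq_one ha
    exact int_modEq_four_of_sin_mul_pi_div_two_eq
      (mul_right_cancel₀ hS₀ (ha.trans hb.symm)) (left_ne_zero_of_mul_eq_one ha)
  · exfalso
    push_cast at hS ha
    rw [cos_pi_div_three] at hS
    have hsin_sq : sin (π / 3) ^ 2 = 3 / 4 := by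
      rw [sin_sq, cos_pi_div_three]; norm_num
    have hS_sq : S ^ 2 * sin (π / 3) ^ 2 < 1 := by
      rw [← sq_abs S, ← mul_pow]
      have hs₀ : 0 ≤ sin (π / 3) := by rw [sin_pi_div_three]; positivity
      exact pow_lt_one₀ (by positivity) (by linarith) two_ne_zero
    nlinarith [sin_sq_int_mul_pi_div_three_le a, congrArg (· ^ 2) ha]
  · exfalso
    have hx₀ : 0 < π / lam := by positivity
    have hx : π / lam ≤ π / 4 :=
      div_le_div_of_nonneg_left pi_pos.le (by norm_num) (by exact_mod_cast h4)
    have hS₁ : 1 ≤ |S| := by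
      calc 1 = |sin (a * (π / lam))| * |S| := by rw [← abs_mul, ha, abs_one]
        _ ≤ 1 * |S| := by gcongr; exact abs_sin_le_one _
        _ = |S| := one_mul _
    nlinarith [two_mul_one_sub_cos_lt_sin hx₀ hx, sin_pos_of_pos_of_lt_pi hx₀ (by linarith [pi_pos])]

noncomputable def polyVertex (lam : ℕ) (r θ : ℝ) (k : ℤ) : ℝ × ℝ :=
  (r * cos (θ + k * π / lam), r * sin (θ + k * π / lam))

def quarterTurn (p : ℝ × ℝ) : ℝ × ℝ := (-p.2, p.1)

section polyVertex

variable {lam : ℕ} {r θ : ℝ}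

lemma polyVertex_congr (hlam : lam ≠ 0) {j k : ℤ} (h : j ≡ k [ZMOD 2 * lam]) :
    polyVertex lam r θ j = polyVertex lam r θ k := by
  obtain ⟨n, hn⟩ := (Int.modEq_iff_dvd.mp h)
  have hangle : θ + k * π / lam = θ + j * π / lam + n * (2 * π) := by
    rw [show (k : ℝ) = j + 2 * lam * n by exact_mod_cast (by omega : k = j + 2 * lam * n)]
    field_simp
    ring
  simp only [polyVertex, hangle, cos_add_int_mul_two_pi, sin_add_int_mul_two_pi]

lemma polyVerts_eq_polyVertex (i : Fin (2 * lam)) :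
    polyVerts lam r θ i = polyVertex lam r θ (i : ℕ) := by
  simp [polyVerts, polyVertex]

lemma range_polyVerts (hlam : lam ≠ 0) :
    Set.range (polyVerts lam r θ) = Set.range (polyVertex lam r θ) := by
  apply Set.Subset.antisymm
  · rintro _ ⟨i, rfl⟩
    exact ⟨i, (polyVerts_eq_polyVertex i).symm⟩
  · rintro _ ⟨k, rfl⟩
    have h2lam : (0 : ℤ) < 2 * lam := by omega
    have hk₀ := Int.emod_nonneg k h2lam.ne'
    have hk₁ := Int.emod_lt_of_pos k h2lam
    refine ⟨⟨(k % (2 * lam)).toNat, by omega⟩, ?_⟩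
    rw [polyVerts_eq_polyVertex, Int.toNat_of_nonneg hk₀]
    exact polyVertex_congr hlam (Int.mod_modEq k (2 * lam))

lemma polyVertex_add (m t : ℤ) :
    polyVertex lam r θ (m + t) = cos (t * (π / lam)) • polyVertex lam r θ m +
      sin (t * (π / lam)) • quarterTurn (polyVertex lam r θ m) := by
  have hangle : θ + ((m + t : ℤ) : ℝ) * π / lam = θ + m * π / lam + t * (π / lam) := by
    push_cast; ring
  simp only [polyVertex, quarterTurn, hangle, cos_add, sin_add, Prod.smul_mk, Prod.mk_add_mk,
    smul_eq_mul, Prod.mk.injEq]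
  constructor <;> ring

lemma polyVertex_add_one_ne (hlam : lam ≠ 0) (hr : r ≠ 0) (k : ℤ) :
    polyVertex lam r θ (k + 1) ≠ polyVertex lam r θ k := by
  intro h
  set α := θ + k * π / lam
  have hangle : θ + ((k + 1 : ℤ) : ℝ) * π / lam = α + π / lam := by push_cast; ring
  simp only [polyVertex, hangle, Prod.mk.injEq] at h
  have hcos : cos (π / lam) = 1 := by
    have := sin_sq_add_cos_sq α
    rw [show π / lam = α + π / lam - α by ring, cos_sub, mul_left_cancel₀ hr h.1,
      mul_left_cancel₀ hr h.2]
    linarith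
  have hpos : 0 < π / lam := by positivity
  have hle : π / lam ≤ π := div_le_self pi_pos.le (by exact_mod_cast Nat.one_le_iff_ne_zero.mpr hlam)
  rw [cos_eq_one_iff_of_lt_of_lt (by linarith) (by linarith [pi_pos])] at hcos
  exact hpos.ne' hcos

end polyVertex

section LambdaNorm

variable {lam : ℕ} {r θ : ℝ} {N : ℝ × ℝ → ℝ}

lemma norm_polyVertex (hN : IsNormOn N)
    (hball : {x | N x ≤ 1} = convexHull ℝ (Set.range (polyVertex lam r θ))) (hr : r ≠ 0)
    (k : ℤ) : N (polyVertex lam r θ k) = 1 := by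
  set p := polyVertex lam r θ k
  let ℓ : ℝ × ℝ →ₗ[ℝ] ℝ := p.1 • LinearMap.fst ℝ ℝ ℝ + p.2 • LinearMap.snd ℝ ℝ ℝ
  have hℓ : ∀ j : ℤ, ℓ (polyVertex lam r θ j) =
      r ^ 2 * cos (θ + j * π / lam - (θ + k * π / lam)) := fun j => by
    simp only [ℓ, p, polyVertex, LinearMap.add_apply, LinearMap.smul_apply, LinearMap.fst_apply,
      LinearMap.snd_apply, smul_eq_mul, cos_sub]
    ring
  refine hN.eq_one_of_ball_eq_convexHull hball ⟨k, rfl⟩ ℓ ?_ ?_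
  · rintro _ ⟨j, rfl⟩
    rw [hℓ, hℓ, sub_self, cos_zero, mul_one]
    exact mul_le_of_le_one_right (sq_nonneg r) (cos_le_one _)
  · rw [hℓ, sub_self, cos_zero, mul_one]
    positivity

lemma apply_polyVertex_add (φ : ℝ × ℝ →ₗ[ℝ] ℝ) (m t : ℤ) :
    φ (polyVertex lam r θ (m + t)) = cos (t * (π / lam)) * φ (polyVertex lam r θ m) +
      sin (t * (π / lam)) * φ (quarterTurn (polyVertex lam r θ m)) := by
  rw [polyVertex_add, map_add, map_smul, map_smul, smul_eq_mul, smul_eq_mul]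

/-- This is `φ (P (m ± 1)) < 1`, expanded by `polyVertex_add`. -/
lemma IsStrictNormingN.abs_apply_quarterTurn_mul_sin_lt (hlam : lam ≠ 0) (hr : r ≠ 0)
    (hunit : ∀ k, N (polyVertex lam r θ k) = 1) {φ : ℝ × ℝ →ₗ[ℝ] ℝ} {m : ℤ}
    (h : IsStrictNormingN N φ (polyVertex lam r θ m)) :
    |φ (quarterTurn (polyVertex lam r θ m))| * sin (π / lam) < 1 - cos (π / lam) := by
  have hnext := h.apply_lt_one (hunit _) (polyVertex_add_one_ne hlam hr m)
  have hprev := h.apply_lt_one (hunit _)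
    (by simpa using (polyVertex_add_one_ne hlam hr (m - 1)).symm)
  rw [sub_eq_add_neg] at hprev
  rw [apply_polyVertex_add, h.apply_eq_one] at hnext hprev
  simp only [Int.cast_one, Int.cast_neg, one_mul, neg_one_mul, cos_neg, sin_neg, mul_one]
    at hnext hprev
  rcases abs_cases (φ (quarterTurn (polyVertex lam r θ m))) with ⟨h, -⟩ | ⟨h, -⟩ <;>
    rw [h] <;> linarith

lemma abs_sub_apply_quarterTurn_mul_sin_lt (hlam : lam ≠ 0) (hr : r ≠ 0)
    (hunit : ∀ k, N (polyVertex lam r θ k) = 1) {φ ψ : ℝ × ℝ →ₗ[ℝ] ℝ} {m : ℤ}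
    (hφ : IsStrictNormingN N φ (polyVertex lam r θ m))
    (hψ : IsStrictNormingN N ψ (polyVertex lam r θ m)) :
    |(ψ - φ) (quarterTurn (polyVertex lam r θ m))| * sin (π / lam) < 2 * (1 - cos (π / lam)) := by
  have hsin : 0 ≤ sin (π / lam) := sin_nonneg_of_nonneg_of_le_pi (by positivity)
    (div_le_self pi_pos.le (by exact_mod_cast Nat.one_le_iff_ne_zero.mpr hlam))
  have h₁ := hφ.abs_apply_quarterTurn_mul_sin_lt hlam hr hunit
  have h₂ := hψ.abs_apply_quarterTurn_mul_sin_lt hlam hr hunit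
  calc _ ≤ (|ψ (quarterTurn (polyVertex lam r θ m))| + |φ (quarterTurn (polyVertex lam r θ m))|) *
        sin (π / lam) := by gcongr; exact abs_sub _ _
    _ < 2 * (1 - cos (π / lam)) := by linarith

end LambdaNorm

/-- A λ-normed plane never satisfies the third non-uniqueness condition. -/
theorem lambda_plane_no_third_condition
    (lam : ℕ) (hlam : 2 ≤ lam)
    (N : ℝ × ℝ → ℝ) (hN : IsLambdaNorm lam N) :
    ¬ ∃ (x₁ x₂ x₃ : ℝ × ℝ) (φ₁ φ₂ φ₃ : (ℝ × ℝ) →ₗ[ℝ] ℝ),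
        ZeroTypeN N x₁ ∧ ZeroTypeN N x₂ ∧ x₂ = -x₁ ∧ FirstTypeN N x₃ ∧
        IsNormingN N φ₁ x₁ ∧ IsNormingN N φ₂ x₂ ∧ IsNormingN N φ₃ x₃ ∧
        φ₁ + φ₂ + φ₃ = 0 ∧
        (∀ y : ℝ × ℝ, N y = 1 → φ₁ y = 1 → y = x₁) ∧
        (∀ y : ℝ × ℝ, N y = 1 → φ₂ y = 1 → y = x₂) := by
  obtain ⟨hN, r, hr, θ, hball⟩ := hN
  have hlam₀ : lam ≠ 0 := by omega
  rw [range_polyVerts hlam₀] at hball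
  set P := polyVertex lam r θ
  have hunit : ∀ k, N (P k) = 1 := norm_polyVertex hN hball hr.ne'
  have hV : ∀ v ∈ Set.range P, N v = 1 := by rintro _ ⟨k, rfl⟩; exact hunit k
  rintro ⟨x₁, _, x₃, φ₁, φ₂, φ₃, ⟨hx₁, -⟩, ⟨hx₂, -⟩, rfl, hx₃, hφ₁, hφ₂, hφ₃, hsum, huniq₁,
    huniq₂⟩
  have h₁ : IsStrictNormingN N φ₁ x₁ := ⟨hφ₁, hx₁, huniq₁⟩
  have h₂ : IsStrictNormingN N (-φ₂) x₁ := neg_neg x₁ ▸ IsStrictNormingN.neg hN ⟨hφ₂, hx₂, huniq₂⟩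
  obtain ⟨m, rfl⟩ := h₁.mem hball hV
  have hφ₃eq : φ₃ = -φ₂ - φ₁ := by rw [eq_neg_of_add_eq_zero_right hsum]; abel
  have hφ₃P : ∀ t : ℤ, φ₃ (P (m + t)) = sin (t * (π / lam)) * φ₃ (quarterTurn (P m)) := by
    intro t
    rw [apply_polyVertex_add, hφ₃eq, LinearMap.sub_apply, h₁.apply_eq_one, h₂.apply_eq_one]
    ring
  have hS := hφ₃eq ▸ abs_sub_apply_quarterTurn_mul_sin_lt hlam₀ hr.ne' hunit h₁ h₂
  obtain ⟨_, ⟨⟨j, rfl⟩, hj⟩, _, ⟨⟨k, rfl⟩, hk⟩, hjk⟩ :=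
    hx₃.nontrivial_setOf_apply_eq_one hball hV hφ₃.1 (hφ₃.2.trans hx₃.1)
  rw [← add_sub_cancel m j, hφ₃P] at hj
  rw [← add_sub_cancel m k, hφ₃P] at hk
  refine hjk (polyVertex_congr hlam₀ ?_)
  simpa using (int_modEq_of_sin_mul_eq_one hlam hS hj hk).add_left m
end
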